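/- arXiv:0901.1389 — 3 statements merged into one kernel-verified Lean document; each statement's English description precedes it below -/
import Mathlib

section
/- Every finite connected 3-edge connected graph Γ of minimal valence ≥ 3 admits a finite sequence of edge contractions from a 3-regular, 3-edge connected graph Γ* to Γ; i.e. there exists a 3-regular 3-edge connected graph Γ* and a surjective edge-contracting map Γ* → Γ with b₁(Γ*) = b₁(Γ). -/
/-! Basic theory of finite multigraphs (loops and multiple edges allowed),
following Caporaso–Viviani, "Torelli theorem for graphs and tropical curves". -/

noncomputable section

open scoped Classical

/-- A finite multigraph: finite types of vertices and edges, each edge having two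
(possibly equal) endpoints `fst e` and `snd e`. -/
structure Multigraph where
  V : Type
  E : Type
  [fintV : Fintype V]
  [fintE : Fintype E]
  fst : E → V
  snd : E → V

namespace Multigraph

attribute [instance] Multigraph.fintV Multigraph.fintE

variable (G : Multigraph)

/-- Two vertices are adjacent if some edge joins them. -/
def Adj (v w : G.V) : Prop :=
  ∃ e : G.E, (G.fst e = v ∧ G.snd e = w) ∨ (G.fst e = w ∧ G.snd e = v)

/-- Reachability by walks. -/
def Reachable (v w : G.V) : Prop := Relation.ReflTransGen G.Adj v w

def Preconnected : Prop := ∀ v w : G.V, G.Reachable v w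

def Connected : Prop := Nonempty G.V ∧ G.Preconnected

/-- The number of connected components. -/
def numComponents : ℕ := Nat.card (Quot G.Adj)

/-- The first Betti number `b₁ = c - #V + #E`. -/
def b1 : ℤ := (G.numComponents : ℤ) + (Nat.card G.E : ℤ) - (Nat.card G.V : ℤ)

/-- The spanning subgraph `Γ∖S` obtained by deleting the edges in `S`. -/
def deleteEdges (S : Set G.E) : Multigraph :=
  { V := G.V
    E := {e : G.E // e ∉ S}
    fst := fun e => G.fst e.1
    snd := fun e => G.snd e.1
    fintV := G.fintV
    fintE := Fintype.ofFinite _ }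

/-- The subgraph spanned by a set of edges: its vertices are the incident vertices. -/
def restrict (S : Set G.E) : Multigraph :=
  { V := {v : G.V // ∃ e ∈ S, G.fst e = v ∨ G.snd e = v}
    E := ↥S
    fst := fun e => ⟨G.fst e.1, e.1, e.2, Or.inl rfl⟩
    snd := fun e => ⟨G.snd e.1, e.1, e.2, Or.inr rfl⟩
    fintV := Fintype.ofFinite _
    fintE := Fintype.ofFinite _ }

/-- The graph `Γ(S)` obtained by contracting all the edges *not* in `S`; its vertices
are the connected components of `Γ∖S` and its edges are the elements of `S`. -/
def contractCompl (S : Set G.E) : Multigraph :=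
  { V := Quot (G.deleteEdges S).Adj
    E := ↥S
    fst := fun e => Quot.mk _ (G.fst e.1)
    snd := fun e => Quot.mk _ (G.snd e.1)
    fintV := Fintype.ofFinite _
    fintE := Fintype.ofFinite _ }

/-- An edge is separating if its endpoints are no longer joined after deleting it. -/
def IsSeparating (e : G.E) : Prop :=
  ¬ (G.deleteEdges {e}).Reachable (G.fst e) (G.snd e)

/-- The set of separating edges. -/
def sepEdges : Set G.E := {e | G.IsSeparating e}

/-- The graph with its isolated vertices removed. -/
def core : Multigraph := G.restrict Set.univ

/-- A cycle: a connected graph, free from separating edges, with `b₁ = 1`. -/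
def IsCycleGraph : Prop := G.Connected ∧ G.sepEdges = ∅ ∧ G.b1 = 1

/-- `S` is (the edge set of) a cycle subgraph of `G`. -/
def IsCycleSet (S : Set G.E) : Prop := (G.restrict S).IsCycleGraph

/-- `S` is a C1-set of `G`: writing `Γ̃ = Γ∖E(Γ)_sep`, the set `S` consists of
non-separating edges, the contraction `Γ̃(S)` (with isolated vertices removed) is a
cycle, and `Γ̃∖S` has no separating edges.  (Equivalently, `S` is a C1-set of the
connected component of `Γ̃` containing it.) -/
def IsC1 (S : Set G.E) : Prop :=
  (∀ e ∈ S, ¬ G.IsSeparating e) ∧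
  (((G.deleteEdges G.sepEdges).contractCompl {e | e.1 ∈ S}).core).IsCycleGraph ∧
  ((G.deleteEdges G.sepEdges).deleteEdges {e | e.1 ∈ S}).sepEdges = ∅

/-! ### Orientations -/

/-- An orientation is encoded by a map `E → Bool`; `src` is the source of an edge. -/
def src (o : G.E → Bool) (e : G.E) : G.V := if o e then G.fst e else G.snd e

/-- The target of an edge under the orientation `o`. -/
def tgt (o : G.E → Bool) (e : G.E) : G.V := if o e then G.snd e else G.fst e

/-- An orientation is totally cyclic if there is no nonempty set of vertices `W`,
whose complement meets the component of a vertex of `W`, such that all edges between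
`W` and its complement go in the same direction. -/
def IsTotallyCyclic (o : G.E → Bool) : Prop :=
  ∀ W : Set G.V, W.Nonempty →
    (∃ v ∈ W, ∃ w, w ∉ W ∧ G.Reachable v w) →
    (∃ e, G.src o e ∈ W ∧ G.tgt o e ∉ W) ∧ (∃ e, G.tgt o e ∈ W ∧ G.src o e ∉ W)

/-- Directed reachability with respect to an orientation. -/
def DReachable (o : G.E → Bool) (v w : G.V) : Prop :=
  Relation.ReflTransGen (fun a b => ∃ e, G.src o e = a ∧ G.tgt o e = b) v w

/-! ### Homology -/

/-- Incidence of an oriented edge on a vertex: `(tgt e = v) - (src e = v)`. -/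
def inc (o : G.E → Bool) (e : G.E) (v : G.V) : ℤ :=
  (if G.tgt o e = v then 1 else 0) - (if G.src o e = v then 1 else 0)

/-- `H₁(Γ,ℤ)`: the kernel of the boundary map `C₁(Γ,ℤ) → C₀(Γ,ℤ)`. -/
def cycleSpace (o : G.E → Bool) : Submodule ℤ (G.E → ℤ) where
  carrier := {f | ∀ v, ∑ e, f e * G.inc o e v = 0}
  zero_mem' := by intro v; simp
  add_mem' := by
    intro f g hf hg v
    simp only [Set.mem_setOf_eq] at hf hg
    simp [add_mul, Finset.sum_add_distrib, hf v, hg v]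
  smul_mem' := by
    intro c f hf v
    simp only [Set.mem_setOf_eq] at hf
    simp [smul_eq_mul, mul_assoc, ← Finset.mul_sum, hf v]

/-- Real incidence. -/
def incR (o : G.E → Bool) (e : G.E) (v : G.V) : ℝ := (G.inc o e v : ℝ)

/-- `H₁(Γ,ℝ)`: the kernel of the boundary map `C₁(Γ,ℝ) → C₀(Γ,ℝ)`. -/
def cycleSpaceR (o : G.E → Bool) : Submodule ℝ (G.E → ℝ) where
  carrier := {f | ∀ v, ∑ e, f e * G.incR o e v = 0}
  zero_mem' := by intro v; simp
  add_mem' := by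
    intro f g hf hg v
    simp only [Set.mem_setOf_eq] at hf hg
    simp [add_mul, Finset.sum_add_distrib, hf v, hg v]
  smul_mem' := by
    intro c f hf v
    simp only [Set.mem_setOf_eq] at hf
    simp [smul_eq_mul, mul_assoc, ← Finset.mul_sum, hf v]

/-- The indicator chain of a set of edges. -/
def indicator (S : Set G.E) : G.E → ℤ := fun e => if e ∈ S then 1 else 0

/-- `S` is a cyclically oriented cycle of `G` for the orientation `o`: `S` is a cycle
and its indicator chain is a homology class (each vertex of the cycle has one ingoing
and one outgoing edge of `S`). -/
def IsCyclicallyOriented (o : G.E → Bool) (S : Set G.E) : Prop :=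
  G.IsCycleSet S ∧ G.indicator S ∈ G.cycleSpace o

/-- The coordinate functional `e*` restricted to `H₁(Γ,ℝ)`. -/
def edgeFunR (o : G.E → Bool) (e : G.E) : Module.Dual ℝ ↥(G.cycleSpaceR o) :=
  (LinearMap.proj e).comp (G.cycleSpaceR o).subtype

/-! ### Connectivity and regularity -/

/-- The degree (valence) of a vertex; loops count twice. -/
def degree (v : G.V) : ℕ :=
  Nat.card {e : G.E // G.fst e = v} + Nat.card {e : G.E // G.snd e = v}

/-- A graph is 3-regular if every vertex has valence 3. -/
def ThreeRegular : Prop := ∀ v : G.V, G.degree v = 3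

/-- Deletion of a set of vertices, together with all incident edges. -/
def deleteVerts (W : Set G.V) : Multigraph :=
  { V := {v : G.V // v ∉ W}
    E := {e : G.E // G.fst e ∉ W ∧ G.snd e ∉ W}
    fst := fun e => ⟨G.fst e.1, e.2.1⟩
    snd := fun e => ⟨G.snd e.1, e.2.2⟩
    fintV := Fintype.ofFinite _
    fintE := Fintype.ofFinite _ }

/-- 3-edge connectivity: removing any 2 edges leaves the graph connected. -/
def EdgeConnected3 : Prop :=
  Nonempty G.V ∧ ∀ F : Set G.E, Nat.card F ≤ 2 → (G.deleteEdges F).Preconnected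

/-- 3-connectivity: removing any 2 vertices (with incident edges) leaves the graph
connected. -/
def Connected3 : Prop :=
  Nonempty G.V ∧ ∀ W : Set G.V, Nat.card W ≤ 2 → (G.deleteVerts W).Preconnected

/-- Isomorphism of multigraphs. -/
def IsIsoTo (G H : Multigraph) : Prop :=
  ∃ (fV : G.V ≃ H.V) (fE : G.E ≃ H.E), ∀ e : G.E,
    (H.fst (fE e) = fV (G.fst e) ∧ H.snd (fE e) = fV (G.snd e)) ∨
    (H.fst (fE e) = fV (G.snd e) ∧ H.snd (fE e) = fV (G.fst e))

/-- A bijection of edge sets is cyclic if it induces a bijection between cycles. -/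
def IsCyclicBijection (G G' : Multigraph) (ε : G.E ≃ G'.E) : Prop :=
  ∀ S : Set G.E, G.IsCycleSet S ↔ G'.IsCycleSet (⇑ε '' S)

/-- Two orientations are equal as orientations (encodings may differ on loops). -/
def OrientEq (o₁ o₂ : G.E → Bool) : Prop :=
  ∀ e : G.E, G.src o₁ e = G.src o₂ e ∧ G.tgt o₁ e = G.tgt o₂ e

/-- `o` is an orientation of `G` extending the orientation `φ` of `Γ∖T`. -/
def ExtendsOrient (T : Set G.E) (φ : (G.deleteEdges T).E → Bool) (o : G.E → Bool) : Prop :=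
  ∀ e : (G.deleteEdges T).E,
    G.src o e.1 = (G.deleteEdges T).src φ e ∧ G.tgt o e.1 = (G.deleteEdges T).tgt φ e

end Multigraph

namespace Multigraph

variable (G : Multigraph)

/-! ### Cuts -/

def Crosses (X : Set G.V) (e : G.E) : Prop := ¬ ((G.fst e ∈ X) ↔ (G.snd e ∈ X))

noncomputable def cut (X : Set G.V) : ℕ := (Finset.univ.filter (fun e => G.Crosses X e)).card

variable {G}

lemma crosses_compl (X : Set G.V) (e : G.E) : G.Crosses Xᶜ e ↔ G.Crosses X e := by
  simp only [Crosses, Set.mem_compl_iff]; tauto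

lemma cut_compl (X : Set G.V) : G.cut Xᶜ = G.cut X := by
  unfold cut; congr 1; apply Finset.filter_congr; intro e _; simp [crosses_compl]

lemma cut_submod (X Y : Set G.V) :
    G.cut (X ∩ Y) + G.cut (X ∪ Y) ≤ G.cut X + G.cut Y := by
  unfold cut
  simp only [Finset.card_filter]
  rw [← Finset.sum_add_distrib, ← Finset.sum_add_distrib]
  apply Finset.sum_le_sum
  intro e _
  by_cases h1 : G.fst e ∈ X <;> by_cases h2 : G.snd e ∈ X <;>
    by_cases h3 : G.fst e ∈ Y <;> by_cases h4 : G.snd e ∈ Y <;>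
    simp [Crosses, h1, h2, h3, h4]

/-- reachability stays on one side of an uncrossed set -/
lemma reach_stays {X : Set G.V} (hX : ∀ e, ¬ G.Crosses X e) {a b : G.V}
    (h : G.Reachable a b) (ha : a ∈ X) : b ∈ X := by
  induction h with
  | refl => exact ha
  | tail _ hadj ih =>
      obtain ⟨e, he⟩ := hadj
      have := hX e
      simp only [Crosses, not_not] at this
      rcases he with ⟨h1, h2⟩ | ⟨h1, h2⟩
      · rw [← h2]; rw [← h1] at ih; exact this.mp ih
      · rw [← h1]; rw [← h2] at ih; exact this.mpr ih

lemma cut_ge_of_ec3 (h3 : G.EdgeConnected3) (X : Set G.V) (hne : X.Nonempty)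
    (hpr : X ≠ Set.univ) : 3 ≤ G.cut X := by
  by_contra hlt
  push_neg at hlt
  set F : Set G.E := {e | G.Crosses X e} with hF
  have hcard : Nat.card F ≤ 2 := by
    have : Nat.card F = G.cut X := by
      simp [hF, cut, Nat.card_eq_fintype_card, Fintype.card_subtype]
    omega
  obtain ⟨a, ha⟩ := hne
  obtain ⟨b, hb⟩ : ∃ b, b ∉ X := by
    by_contra hall; push_neg at hall; exact hpr (Set.eq_univ_iff_forall.mpr hall)
  have hreach := h3.2 F hcard a b
  have : b ∈ X := by
    refine reach_stays (G := G.deleteEdges F) ?_ hreach ha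
    intro e hcr
    exact e.2 hcr
  exact hb this

lemma ec3_of_cut (hne : Nonempty G.V)
    (hcut : ∀ X : Set G.V, X.Nonempty → X ≠ Set.univ → 3 ≤ G.cut X) :
    G.EdgeConnected3 := by
  refine ⟨hne, fun F hF v w => ?_⟩
  by_contra hnr
  set X : Set G.V := {u | (G.deleteEdges F).Reachable v u} with hX
  have hvX : v ∈ X := Relation.ReflTransGen.refl
  have hwX : w ∉ X := hnr
  have hsub : ∀ e : G.E, G.Crosses X e → e ∈ F := by
    intro e hcr
    by_contra heF
    apply hcr
    constructor
    · intro h1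
      exact Relation.ReflTransGen.tail h1 ⟨⟨e, heF⟩, Or.inl ⟨rfl, rfl⟩⟩
    · intro h2
      exact Relation.ReflTransGen.tail h2 ⟨⟨e, heF⟩, Or.inr ⟨rfl, rfl⟩⟩
  have : G.cut X ≤ Nat.card F := by
    rw [Nat.card_eq_fintype_card, Fintype.card_subtype]
    exact Finset.card_le_card (fun e he => by
      simp only [Finset.mem_filter, Finset.mem_univ, true_and] at he ⊢
      exact hsub e he)
  have h3 := hcut X ⟨v, hvX⟩ (by intro h; exact hwX (h ▸ Set.mem_univ w))
  omega

lemma preconnected_of_ec3 (h3 : G.EdgeConnected3) : G.Preconnected := by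
  intro v w
  have := h3.2 ∅ (by simp) v w
  refine Relation.ReflTransGen.mono ?_ _ _ this
  rintro a b ⟨e, he⟩
  exact ⟨e.1, he⟩

lemma numComponents_eq_one (hc : G.Connected) : G.numComponents = 1 := by
  rw [numComponents, Nat.card_eq_one_iff_unique]
  constructor
  · constructor
    intro a b
    induction a using Quot.ind with | _ a =>
    induction b using Quot.ind with | _ b =>
    have := hc.2 a b
    induction this with
    | refl => rfl
    | tail _ hadj ih => exact ih.trans (Quot.sound hadj)
  · exact ⟨Quot.mk _ hc.1.some⟩

lemma handshake : ∑ v : G.V, G.degree v = 2 * Nat.card G.E := by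
  have h1 : ∑ v : G.V, Nat.card {e : G.E // G.fst e = v} = Nat.card G.E := by
    simp only [Nat.card_eq_fintype_card, Fintype.card_subtype]
    rw [← Finset.card_univ (α := G.E)]
    exact (Finset.card_eq_sum_card_fiberwise (fun e _ => Finset.mem_univ (G.fst e))).symm
  have h2 : ∑ v : G.V, Nat.card {e : G.E // G.snd e = v} = Nat.card G.E := by
    simp only [Nat.card_eq_fintype_card, Fintype.card_subtype]
    rw [← Finset.card_univ (α := G.E)]
    exact (Finset.card_eq_sum_card_fiberwise (fun e _ => Finset.mem_univ (G.snd e))).symm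
  simp only [degree, Finset.sum_add_distrib, h1, h2]
  ring



section helpers
variable {α : Type} [Fintype α]

lemma card_subtype_option (p : Option α → Prop) :
    Nat.card {x : Option α // p x} =
      (if p none then 1 else 0) + (Finset.univ.filter (fun a => p (some a))).card := by
  rw [Nat.card_eq_fintype_card, Fintype.card_subtype, Finset.card_filter, Fintype.sum_option,
    Finset.card_filter]

lemma card_subtype_eq_filter (p : α → Prop) :
    Nat.card {x // p x} = (Finset.univ.filter p).card := by
  simp [Nat.card_eq_fintype_card, Fintype.card_subtype]

end helpers

variable (G : Multigraph)

def movedF (e₁ e₂ : G.E) (s₁ s₂ : Bool) (e : G.E) : Prop :=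
  (e = e₁ ∧ s₁ = true) ∨ (e = e₂ ∧ s₂ = true)

def movedS (e₁ e₂ : G.E) (s₁ s₂ : Bool) (e : G.E) : Prop :=
  (e = e₁ ∧ s₁ = false) ∨ (e = e₂ ∧ s₂ = false)

/-- the endpoint of `e` selected by `s` -/
def endpt (e : G.E) (s : Bool) : G.V := if s then G.fst e else G.snd e

/-- the endpoint of `e` opposite to the one selected by `s` -/
def other (e : G.E) (s : Bool) : G.V := if s then G.snd e else G.fst e

/-- Split the vertex `v` into `none` (carrying the selected ends of `e₁`, `e₂`)
and `some v`, joined by the new edge `none`. -/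
def split (v : G.V) (e₁ e₂ : G.E) (s₁ s₂ : Bool) : Multigraph where
  V := Option G.V
  E := Option G.E
  fst := fun e' => match e' with
    | none => some v
    | some e => if G.movedF e₁ e₂ s₁ s₂ e then none else some (G.fst e)
  snd := fun e' => match e' with
    | none => none
    | some e => if G.movedS e₁ e₂ s₁ s₂ e then none else some (G.snd e)

variable {G}
variable {v : G.V} {e₁ e₂ : G.E} {s₁ s₂ : Bool}

lemma split_fst_some (e : G.E) : (G.split v e₁ e₂ s₁ s₂).fst (some e)
    = if G.movedF e₁ e₂ s₁ s₂ e then none else some (G.fst e) := rfl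
lemma split_snd_some (e : G.E) : (G.split v e₁ e₂ s₁ s₂).snd (some e)
    = if G.movedS e₁ e₂ s₁ s₂ e then none else some (G.snd e) := rfl
lemma split_fst_none : (G.split v e₁ e₂ s₁ s₂).fst none = some v := rfl
lemma split_snd_none : (G.split v e₁ e₂ s₁ s₂).snd none = none := rfl

lemma movedF_fst (h1 : G.endpt e₁ s₁ = v) (h2 : G.endpt e₂ s₂ = v) {e : G.E}
    (h : G.movedF e₁ e₂ s₁ s₂ e) : G.fst e = v := by
  rcases h with ⟨rfl, hs⟩ | ⟨rfl, hs⟩ <;> simp_all [endpt]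

lemma movedS_snd (h1 : G.endpt e₁ s₁ = v) (h2 : G.endpt e₂ s₂ = v) {e : G.E}
    (h : G.movedS e₁ e₂ s₁ s₂ e) : G.snd e = v := by
  rcases h with ⟨rfl, hs⟩ | ⟨rfl, hs⟩ <;> simp_all [endpt]

lemma card_movedF (hne : e₁ ≠ e₂) :
    (Finset.univ.filter (G.movedF e₁ e₂ s₁ s₂)).card
      = (if s₁ then 1 else 0) + (if s₂ then 1 else 0) := by
  have h : Finset.univ.filter (G.movedF e₁ e₂ s₁ s₂)
      = (if s₁ then {e₁} else ∅) ∪ (if s₂ then {e₂} else ∅) := by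
    ext e; cases s₁ <;> cases s₂ <;> simp [movedF]
  rw [h]
  have hu2 : ({e₁} ∪ {e₂} : Finset G.E).card = 2 := by
    rw [Finset.card_union_of_disjoint (by simp [hne, hne.symm])]; rfl
  cases s₁ <;> cases s₂ <;> simp [hu2, Finset.card_pair hne]

lemma card_movedS (hne : e₁ ≠ e₂) :
    (Finset.univ.filter (G.movedS e₁ e₂ s₁ s₂)).card
      = (if s₁ then 0 else 1) + (if s₂ then 0 else 1) := by
  have h : Finset.univ.filter (G.movedS e₁ e₂ s₁ s₂)
      = (if s₁ then ∅ else {e₁}) ∪ (if s₂ then ∅ else {e₂}) := by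
    ext e; cases s₁ <;> cases s₂ <;> simp [movedS]
  rw [h]
  have hu2 : ({e₁} ∪ {e₂} : Finset G.E).card = 2 := by
    rw [Finset.card_union_of_disjoint (by simp [hne, hne.symm])]; rfl
  cases s₁ <;> cases s₂ <;> simp [hu2, Finset.card_pair hne]

lemma split_degree_none (hne : e₁ ≠ e₂) :
    (G.split v e₁ e₂ s₁ s₂).degree none = 3 := by
  show Nat.card {x : Option G.E // (G.split v e₁ e₂ s₁ s₂).fst x = none}
     + Nat.card {x : Option G.E // (G.split v e₁ e₂ s₁ s₂).snd x = none} = 3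
  rw [card_subtype_option, card_subtype_option]
  have hf : ∀ e : G.E, ((G.split v e₁ e₂ s₁ s₂).fst (some e) = none) ↔ G.movedF e₁ e₂ s₁ s₂ e := by
    intro e
    show ((if G.movedF e₁ e₂ s₁ s₂ e then none else some (G.fst e) : Option G.V) = none) ↔ _
    split_ifs with h <;> simp [h]
  have hs : ∀ e : G.E, ((G.split v e₁ e₂ s₁ s₂).snd (some e) = none) ↔ G.movedS e₁ e₂ s₁ s₂ e := by
    intro e
    show ((if G.movedS e₁ e₂ s₁ s₂ e then none else some (G.snd e) : Option G.V) = none) ↔ _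
    split_ifs with h <;> simp [h]
  rw [Finset.filter_congr (fun e _ => hf e), Finset.filter_congr (fun e _ => hs e),
    card_movedF hne, card_movedS hne]
  have h1 : ((G.split v e₁ e₂ s₁ s₂).fst none = none) = False := by
    apply eq_false
    show ¬ ((some v : Option G.V) = none)
    simp
  have h2 : ((G.split v e₁ e₂ s₁ s₂).snd none = none) = True := by
    apply eq_true
    show (none : Option G.V) = none
    rfl
  rw [h1, h2]
  cases s₁ <;> cases s₂ <;> simp

lemma split_degree_some (h1 : G.endpt e₁ s₁ = v) (h2 : G.endpt e₂ s₂ = v)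
    {u : G.V} (hu : u ≠ v) :
    (G.split v e₁ e₂ s₁ s₂).degree (some u) = G.degree u := by
  show Nat.card {x : Option G.E // (G.split v e₁ e₂ s₁ s₂).fst x = some u}
     + Nat.card {x : Option G.E // (G.split v e₁ e₂ s₁ s₂).snd x = some u} = G.degree u
  rw [card_subtype_option, card_subtype_option]
  have hf : ∀ e : G.E, ((G.split v e₁ e₂ s₁ s₂).fst (some e) = some u) ↔ G.fst e = u := by
    intro e
    show ((if G.movedF e₁ e₂ s₁ s₂ e then none else some (G.fst e) : Option G.V) = some u) ↔ _
    split_ifs with h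
    · have hv := movedF_fst h1 h2 h
      simp [hv, hu.symm]
    · simp
  have hs : ∀ e : G.E, ((G.split v e₁ e₂ s₁ s₂).snd (some e) = some u) ↔ G.snd e = u := by
    intro e
    show ((if G.movedS e₁ e₂ s₁ s₂ e then none else some (G.snd e) : Option G.V) = some u) ↔ _
    split_ifs with h
    · have hv := movedS_snd h1 h2 h
      simp [hv, hu.symm]
    · simp
  rw [Finset.filter_congr (fun e _ => hf e), Finset.filter_congr (fun e _ => hs e)]
  have h1' : ((G.split v e₁ e₂ s₁ s₂).fst none = some u) = False := by
    apply eq_false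
    show ¬ ((some v : Option G.V) = some u)
    simp only [Option.some.injEq]
    exact fun h => hu h.symm
  have h2' : ((G.split v e₁ e₂ s₁ s₂).snd none = some u) = False := by
    apply eq_false
    show ¬ ((none : Option G.V) = some u)
    simp
  rw [h1', h2']
  simp only [if_false, zero_add]
  rw [degree, card_subtype_eq_filter, card_subtype_eq_filter]

lemma split_degree_v (hne : e₁ ≠ e₂) (h1 : G.endpt e₁ s₁ = v) (h2 : G.endpt e₂ s₂ = v) :
    (G.split v e₁ e₂ s₁ s₂).degree (some v) + 1 = G.degree v := by
  have key : ∀ (sel : G.E → G.V) (mov : G.E → Prop), (∀ e, mov e → sel e = v) →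
      (Finset.univ.filter (fun e => ¬ mov e ∧ sel e = v)).card
        + (Finset.univ.filter mov).card
      = (Finset.univ.filter (fun e => sel e = v)).card := by
    intro sel mov hmv
    have e1 : Finset.univ.filter (fun e => ¬ mov e ∧ sel e = v)
        = (Finset.univ.filter (fun e => sel e = v)).filter (fun e => ¬ mov e) := by
      rw [Finset.filter_filter]; apply Finset.filter_congr; intro e _; tauto
    have e2 : Finset.univ.filter mov
        = (Finset.univ.filter (fun e => sel e = v)).filter (fun e => mov e) := by
      rw [Finset.filter_filter]; apply Finset.filter_congr; intro e _
      constructor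
      · intro h; exact ⟨hmv e h, h⟩
      · tauto
    rw [e1, e2, add_comm]
    exact Finset.card_filter_add_card_filter_not (fun e => mov e)
  show Nat.card {x : Option G.E // (G.split v e₁ e₂ s₁ s₂).fst x = some v}
     + Nat.card {x : Option G.E // (G.split v e₁ e₂ s₁ s₂).snd x = some v} + 1 = G.degree v
  rw [card_subtype_option, card_subtype_option]
  have hf : ∀ e : G.E, ((G.split v e₁ e₂ s₁ s₂).fst (some e) = some v)
      ↔ (¬ G.movedF e₁ e₂ s₁ s₂ e ∧ G.fst e = v) := by
    intro e
    show ((if G.movedF e₁ e₂ s₁ s₂ e then none else some (G.fst e) : Option G.V) = some v) ↔ _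
    split_ifs with h <;> simp [h]
  have hs : ∀ e : G.E, ((G.split v e₁ e₂ s₁ s₂).snd (some e) = some v)
      ↔ (¬ G.movedS e₁ e₂ s₁ s₂ e ∧ G.snd e = v) := by
    intro e
    show ((if G.movedS e₁ e₂ s₁ s₂ e then none else some (G.snd e) : Option G.V) = some v) ↔ _
    split_ifs with h <;> simp [h]
  rw [Finset.filter_congr (fun e _ => hf e), Finset.filter_congr (fun e _ => hs e)]
  have h1' : ((G.split v e₁ e₂ s₁ s₂).fst none = some v) = True := by
    apply eq_true
    show (some v : Option G.V) = some v
    rfl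
  have h2' : ((G.split v e₁ e₂ s₁ s₂).snd none = some v) = False := by
    apply eq_false
    show ¬ ((none : Option G.V) = some v)
    simp
  rw [h1', h2']
  simp only [if_true, if_false, zero_add]
  have kf := key G.fst (G.movedF e₁ e₂ s₁ s₂) (fun e => movedF_fst h1 h2)
  have ks := key G.snd (G.movedS e₁ e₂ s₁ s₂) (fun e => movedS_snd h1 h2)
  have mf := card_movedF (G := G) (s₁ := s₁) (s₂ := s₂) hne
  have ms := card_movedS (G := G) (s₁ := s₁) (s₂ := s₂) hne
  rw [degree, card_subtype_eq_filter, card_subtype_eq_filter]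
  have htot : ((if s₁ then 1 else 0) + (if s₂ then 1 else 0))
      + ((if s₁ then 0 else 1) + (if s₂ then 0 else 1)) = 2 := by
    cases s₁ <;> cases s₂ <;> simp
  omega



section helpers
variable {α : Type} [Fintype α]

lemma filter_option_card (p : Option α → Prop) :
    (Finset.univ.filter p).card =
      (if p none then 1 else 0) + (Finset.univ.filter (fun a => p (some a))).card := by
  rw [Finset.card_filter, Fintype.sum_option, Finset.card_filter]

lemma card_filter_split2 (p : α → Prop) {a b : α} (hab : a ≠ b) :
    (Finset.univ.filter p).card =
      ((if p a then 1 else 0) + (if p b then 1 else 0))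
        + (((Finset.univ.erase a).erase b).filter p).card := by
  classical
  rw [Finset.card_filter, Finset.card_filter]
  rw [← Finset.add_sum_erase _ _ (Finset.mem_univ a)]
  rw [← Finset.add_sum_erase _ _ (Finset.mem_erase.mpr ⟨hab.symm, Finset.mem_univ b⟩)]
  ring

end helpers

variable {G : Multigraph}
variable {v : G.V} {e₁ e₂ : G.E} {s₁ s₂ : Bool}

lemma movedF_iff₁ (hne : e₁ ≠ e₂) : G.movedF e₁ e₂ s₁ s₂ e₁ ↔ s₁ = true := by
  unfold movedF; simp [hne]
lemma movedF_iff₂ (hne : e₁ ≠ e₂) : G.movedF e₁ e₂ s₁ s₂ e₂ ↔ s₂ = true := by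
  unfold movedF; simp [hne.symm]
lemma movedS_iff₁ (hne : e₁ ≠ e₂) : G.movedS e₁ e₂ s₁ s₂ e₁ ↔ s₁ = false := by
  unfold movedS; simp [hne]
lemma movedS_iff₂ (hne : e₁ ≠ e₂) : G.movedS e₁ e₂ s₁ s₂ e₂ ↔ s₂ = false := by
  unfold movedS; simp [hne.symm]

/-- both `none` and `some v` on the same side: the cut is the corresponding cut of `G`. -/
lemma split_cut_eq (h1 : G.endpt e₁ s₁ = v) (h2 : G.endpt e₂ s₂ = v)
    (X : Set (Option G.V)) (hX : (none ∈ X) ↔ (some v ∈ X)) :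
    (G.split v e₁ e₂ s₁ s₂).cut X = G.cut (some ⁻¹' X) := by
  have memF : ∀ e : G.E,
      (((if G.movedF e₁ e₂ s₁ s₂ e then none else some (G.fst e) : Option G.V)) ∈ X)
        ↔ G.fst e ∈ some ⁻¹' X := by
    intro e; split_ifs with h
    · rw [Set.mem_preimage, movedF_fst h1 h2 h]; exact hX
    · rfl
  have memS : ∀ e : G.E,
      (((if G.movedS e₁ e₂ s₁ s₂ e then none else some (G.snd e) : Option G.V)) ∈ X)
        ↔ G.snd e ∈ some ⁻¹' X := by
    intro e; split_ifs with h
    · rw [Set.mem_preimage, movedS_snd h1 h2 h]; exact hX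
    · rfl
  show (Finset.univ.filter
      (fun x : Option G.E => (G.split v e₁ e₂ s₁ s₂).Crosses X x)).card = G.cut (some ⁻¹' X)
  rw [filter_option_card]
  have hnone : ¬ (G.split v e₁ e₂ s₁ s₂).Crosses X none := by
    show ¬ ¬ (((some v : Option G.V) ∈ X) ↔ ((none : Option G.V) ∈ X))
    exact not_not_intro hX.symm
  rw [if_neg hnone, zero_add]
  have hsome : ∀ e : G.E,
      (G.split v e₁ e₂ s₁ s₂).Crosses X (some e) ↔ G.Crosses (some ⁻¹' X) e := by
    intro e
    show ¬ (((if G.movedF e₁ e₂ s₁ s₂ e then none else some (G.fst e) : Option G.V) ∈ X) ↔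
        ((if G.movedS e₁ e₂ s₁ s₂ e then none else some (G.snd e) : Option G.V) ∈ X)) ↔ _
    exact not_congr (iff_congr (memF e) (memS e))
  rw [Finset.filter_congr (fun e _ => hsome e)]
  rfl

/-- `none ∈ X`, `some v ∉ X`:  the separated case. -/
lemma split_cut_ge_sep (hne : e₁ ≠ e₂) (h1 : G.endpt e₁ s₁ = v) (h2 : G.endpt e₂ s₂ = v)
    (hG : ∀ X : Set G.V, X.Nonempty → X ≠ Set.univ → 3 ≤ G.cut X)
    (hsafe : ∀ Y : Set G.V, Y.Nonempty → v ∉ Y → G.cut Y = 3 →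
      ¬(G.other e₁ s₁ ∈ Y ∧ G.other e₂ s₂ ∈ Y))
    (X : Set (Option G.V)) (hnX : none ∈ X) (hvX : some v ∉ X) :
    3 ≤ (G.split v e₁ e₂ s₁ s₂).cut X := by
  set H := G.split v e₁ e₂ s₁ s₂ with hH
  set Y : Set G.V := some ⁻¹' X with hY
  have hvY : v ∉ Y := hvX
  -- crossing characterizations
  have cnone : H.Crosses X none := by
    show ¬ (((some v : Option G.V) ∈ X) ↔ ((none : Option G.V) ∈ X))
    intro h; exact hvX (h.mpr hnX)
  have csome : ∀ e : G.E, H.Crosses X (some e) ↔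
      ¬ (((if G.movedF e₁ e₂ s₁ s₂ e then none else some (G.fst e) : Option G.V) ∈ X) ↔
         ((if G.movedS e₁ e₂ s₁ s₂ e then none else some (G.snd e) : Option G.V) ∈ X)) :=
    fun e => Iff.rfl
  have ce₁ : H.Crosses X (some e₁) ↔ G.other e₁ s₁ ∉ Y := by
    rw [csome]
    rcases Bool.eq_false_or_eq_true s₁ with hs | hs
    · rw [if_pos (by simp [movedF_iff₁ hne, hs]), if_neg (by simp [movedS_iff₁ hne, hs])]
      have : G.snd e₁ = G.other e₁ s₁ := by simp [other, hs]
      rw [← this]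
      constructor
      · intro h hmem; exact h ⟨fun _ => hmem, fun _ => hnX⟩
      · intro h hiff; exact h (hiff.mp hnX)
    · rw [if_neg (by simp [movedF_iff₁ hne, hs]), if_pos (by simp [movedS_iff₁ hne, hs])]
      have : G.fst e₁ = G.other e₁ s₁ := by simp [other, hs]
      rw [← this]
      constructor
      · intro h hmem; exact h ⟨fun _ => hnX, fun _ => hmem⟩
      · intro h hiff; exact h (hiff.mpr hnX)
  have ce₂ : H.Crosses X (some e₂) ↔ G.other e₂ s₂ ∉ Y := by
    rw [csome]
    rcases Bool.eq_false_or_eq_true s₂ with hs | hs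
    · rw [if_pos (by simp [movedF_iff₂ hne, hs]), if_neg (by simp [movedS_iff₂ hne, hs])]
      have : G.snd e₂ = G.other e₂ s₂ := by simp [other, hs]
      rw [← this]
      constructor
      · intro h hmem; exact h ⟨fun _ => hmem, fun _ => hnX⟩
      · intro h hiff; exact h (hiff.mp hnX)
    · rw [if_neg (by simp [movedF_iff₂ hne, hs]), if_pos (by simp [movedS_iff₂ hne, hs])]
      have : G.fst e₂ = G.other e₂ s₂ := by simp [other, hs]
      rw [← this]
      constructor
      · intro h hmem; exact h ⟨fun _ => hnX, fun _ => hmem⟩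
      · intro h hiff; exact h (hiff.mpr hnX)
  have ge₁ : G.Crosses Y e₁ ↔ G.other e₁ s₁ ∈ Y := by
    unfold Crosses
    rcases Bool.eq_false_or_eq_true s₁ with hs | hs
    · have hf : G.fst e₁ = v := by have := h1; simp [endpt, hs] at this; exact this
      have ho : G.other e₁ s₁ = G.snd e₁ := by simp [other, hs]
      rw [hf, ho]; simp [hvY]
    · have hf : G.snd e₁ = v := by have := h1; simp [endpt, hs] at this; exact this
      have ho : G.other e₁ s₁ = G.fst e₁ := by simp [other, hs]
      rw [hf, ho]; simp [hvY]
  have ge₂ : G.Crosses Y e₂ ↔ G.other e₂ s₂ ∈ Y := by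
    unfold Crosses
    rcases Bool.eq_false_or_eq_true s₂ with hs | hs
    · have hf : G.fst e₂ = v := by have := h2; simp [endpt, hs] at this; exact this
      have ho : G.other e₂ s₂ = G.snd e₂ := by simp [other, hs]
      rw [hf, ho]; simp [hvY]
    · have hf : G.snd e₂ = v := by have := h2; simp [endpt, hs] at this; exact this
      have ho : G.other e₂ s₂ = G.fst e₂ := by simp [other, hs]
      rw [hf, ho]; simp [hvY]
  have crest : ∀ e : G.E, e ≠ e₁ → e ≠ e₂ → (H.Crosses X (some e) ↔ G.Crosses Y e) := by
    intro e he1 he2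
    rw [csome]
    have hmf : ¬ G.movedF e₁ e₂ s₁ s₂ e := by unfold movedF; tauto
    have hms : ¬ G.movedS e₁ e₂ s₁ s₂ e := by unfold movedS; tauto
    rw [if_neg hmf, if_neg hms]
    exact Iff.rfl
  -- main computation
  have hcutX : H.cut X = 1 + (Finset.univ.filter (fun e : G.E => H.Crosses X (some e))).card := by
    show (Finset.univ.filter (fun x : Option G.E => H.Crosses X x)).card = _
    rw [filter_option_card, if_pos cnone]
  by_cases hYe : Y = ∅
  · -- X ∩ some = ∅ : exactly the three edges at `none` cross
    have hc1 : H.Crosses X (some e₁) := ce₁.mpr (by rw [hYe]; exact Set.notMem_empty _)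
    have hc2 : H.Crosses X (some e₂) := ce₂.mpr (by rw [hYe]; exact Set.notMem_empty _)
    rw [hcutX]
    have : ({e₁, e₂} : Finset G.E) ⊆ Finset.univ.filter (fun e => H.Crosses X (some e)) := by
      intro x hx
      simp only [Finset.mem_insert, Finset.mem_singleton] at hx
      rcases hx with rfl | rfl <;> simp [Finset.mem_filter, hc1, hc2]
    have h2le := Finset.card_le_card this
    rw [Finset.card_insert_of_notMem (by simp [hne]), Finset.card_singleton] at h2le
    omega
  · have hYne : Y.Nonempty := Set.nonempty_iff_ne_empty.mpr hYe
    have hYuniv : Y ≠ Set.univ := fun h => hvY (h ▸ Set.mem_univ v)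
    have hcY : 3 ≤ G.cut Y := hG Y hYne hYuniv
    have hA := card_filter_split2 (fun e : G.E => H.Crosses X (some e)) hne
    have hB := card_filter_split2 (fun e : G.E => G.Crosses Y e) hne
    beta_reduce at hA hB
    have hRR : (((Finset.univ.erase e₁).erase e₂).filter
          (fun e : G.E => H.Crosses X (some e))).card
        = (((Finset.univ.erase e₁).erase e₂).filter (fun e : G.E => G.Crosses Y e)).card := by
      congr 1
      apply Finset.filter_congr
      intro e he
      simp only [Finset.mem_erase] at he
      exact crest e he.2.1 he.1
    have hcYeq : G.cut Y = (Finset.univ.filter (fun e : G.E => G.Crosses Y e)).card := rfl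
    rw [hcutX, hA, hRR]
    by_cases ho₁ : G.other e₁ s₁ ∈ Y <;> by_cases ho₂ : G.other e₂ s₂ ∈ Y
    · have h4 : G.cut Y ≠ 3 := fun h3 => hsafe Y hYne hvY h3 ⟨ho₁, ho₂⟩
      rw [hcYeq, hB] at hcY h4
      rw [if_neg (by rw [ce₁]; exact not_not_intro ho₁),
          if_neg (by rw [ce₂]; exact not_not_intro ho₂)]
      rw [if_pos (ge₁.mpr ho₁), if_pos (ge₂.mpr ho₂)] at hcY h4
      omega
    · rw [hcYeq, hB] at hcY
      rw [if_neg (by rw [ce₁]; exact not_not_intro ho₁), if_pos (ce₂.mpr ho₂)]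
      rw [if_pos (ge₁.mpr ho₁), if_neg (by rw [ge₂]; exact ho₂)] at hcY
      omega
    · rw [hcYeq, hB] at hcY
      rw [if_pos (ce₁.mpr ho₁), if_neg (by rw [ce₂]; exact not_not_intro ho₂)]
      rw [if_neg (by rw [ge₁]; exact ho₁), if_pos (ge₂.mpr ho₂)] at hcY
      omega
    · rw [hcYeq, hB] at hcY
      rw [if_pos (ce₁.mpr ho₁), if_pos (ce₂.mpr ho₂)]
      rw [if_neg (by rw [ge₁]; exact ho₁), if_neg (by rw [ge₂]; exact ho₂)] at hcY
      omega

/-- All cuts of the split graph have at least 3 edges. -/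
lemma split_cut_ge (hne : e₁ ≠ e₂) (h1 : G.endpt e₁ s₁ = v) (h2 : G.endpt e₂ s₂ = v)
    (hG : ∀ X : Set G.V, X.Nonempty → X ≠ Set.univ → 3 ≤ G.cut X)
    (hsafe : ∀ Y : Set G.V, Y.Nonempty → v ∉ Y → G.cut Y = 3 →
      ¬(G.other e₁ s₁ ∈ Y ∧ G.other e₂ s₂ ∈ Y)) :
    ∀ X : Set (Option G.V), X.Nonempty → X ≠ Set.univ →
      3 ≤ (G.split v e₁ e₂ s₁ s₂).cut X := by
  have key : ∀ X : Set (Option G.V), X.Nonempty → X ≠ Set.univ → none ∈ X →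
      3 ≤ (G.split v e₁ e₂ s₁ s₂).cut X := by
    intro X hXne hXuniv hnX
    by_cases hvX : some v ∈ X
    · rw [split_cut_eq h1 h2 X (iff_of_true hnX hvX)]
      apply hG
      · exact ⟨v, hvX⟩
      · intro h
        obtain ⟨x, hx⟩ : ∃ x : Option G.V, x ∉ X := by
          by_contra hall; push_neg at hall
          exact hXuniv (Set.eq_univ_iff_forall.mpr hall)
        match x, hx with
        | none, hx => exact hx hnX
        | some u, hx => exact hx (h ▸ Set.mem_univ u : u ∈ some ⁻¹' X)
    · exact split_cut_ge_sep hne h1 h2 hG hsafe X hnX hvX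
  intro X hXne hXuniv
  by_cases hnX : none ∈ X
  · exact key X hXne hXuniv hnX
  · rw [← cut_compl (G := G.split v e₁ e₂ s₁ s₂) X]
    apply key
    · exact ⟨none, hnX⟩
    · intro h
      obtain ⟨x, hx⟩ := hXne
      have : x ∈ (Xᶜ : Set (Option G.V)) := h ▸ Set.mem_univ x
      exact this hx
    · exact hnX


variable {G : Multigraph}

/-- uncrossing: union of two meeting tight sets avoiding `v` is tight -/
lemma union_tight (hG : ∀ X : Set G.V, X.Nonempty → X ≠ Set.univ → 3 ≤ G.cut X)
    {v : G.V} {Z W : Set G.V} (hZW : (Z ∩ W).Nonempty)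
    (hvZ : v ∉ Z) (hvW : v ∉ W) (hZ : G.cut Z = 3) (hW : G.cut W = 3) :
    G.cut (Z ∪ W) = 3 := by
  have hsub := cut_submod (G := G) Z W
  have hint : 3 ≤ G.cut (Z ∩ W) := by
    apply hG _ hZW
    intro h
    exact hvZ (Set.inter_subset_left (h ▸ Set.mem_univ v))
  have huni : 3 ≤ G.cut (Z ∪ W) := by
    apply hG
    · rcases hZW with ⟨x, hx⟩; exact ⟨x, Or.inl hx.1⟩
    · intro h
      have : v ∈ Z ∪ W := h ▸ Set.mem_univ v
      rcases this with h' | h' <;> [exact hvZ h'; exact hvW h']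
  omega

section ends
variable (G)
/-- the ends at a vertex `v` -/
def Ends (v : G.V) : Type := {e : G.E // G.fst e = v} ⊕ {e : G.E // G.snd e = v}
variable {G}

instance (v : G.V) : Fintype (G.Ends v) := by
  unfold Ends; infer_instance

def Ends.edge {v : G.V} : G.Ends v → G.E := fun h => Sum.elim Subtype.val Subtype.val h
def Ends.sel {v : G.V} : G.Ends v → Bool := fun h => Sum.elim (fun _ => true) (fun _ => false) h
def Ends.oth {v : G.V} : G.Ends v → G.V :=
  fun h => Sum.elim (fun x => G.snd x.1) (fun x => G.fst x.1) h

lemma Ends.endpt_eq {v : G.V} (h : G.Ends v) : G.endpt h.edge h.sel = v := by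
  cases h with
  | inl x => simpa [edge, sel, endpt] using x.2
  | inr x => simpa [edge, sel, endpt] using x.2

lemma Ends.other_eq {v : G.V} (h : G.Ends v) : G.other h.edge h.sel = h.oth := by
  cases h with
  | inl x => simp [edge, sel, oth, other]
  | inr x => simp [edge, sel, oth, other]

lemma Ends.card_eq (v : G.V) : Nat.card (G.Ends v) = G.degree v := by
  simp [Ends, degree, Nat.card_eq_fintype_card]

lemma Ends.crosses {v : G.V} (h : G.Ends v) {U : Set G.V} (hvU : v ∉ U) (ho : h.oth ∈ U) :
    G.Crosses U h.edge := by
  cases h with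
  | inl x =>
      simp only [edge, oth, Sum.elim_inl] at ho ⊢
      intro hiff
      rw [x.2] at hiff
      exact hvU (hiff.mpr ho)
  | inr x =>
      simp only [edge, oth, Sum.elim_inr] at ho ⊢
      intro hiff
      rw [x.2] at hiff
      exact hvU (hiff.mp ho)
end ends

lemma exists_safe_pair (hG : ∀ X : Set G.V, X.Nonempty → X ≠ Set.univ → 3 ≤ G.cut X)
    (v : G.V) (hd : 4 ≤ G.degree v) :
    ∃ (e₁ e₂ : G.E) (s₁ s₂ : Bool), e₁ ≠ e₂ ∧ G.endpt e₁ s₁ = v ∧ G.endpt e₂ s₂ = v ∧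
      ∀ Y : Set G.V, Y.Nonempty → v ∉ Y → G.cut Y = 3 →
        ¬(G.other e₁ s₁ ∈ Y ∧ G.other e₂ s₂ ∈ Y) := by
  by_contra hcon'
  push_neg at hcon'
  have hcon : ∀ h g : G.Ends v, h.edge ≠ g.edge →
      ∃ Y : Set G.V, Y.Nonempty ∧ v ∉ Y ∧ G.cut Y = 3 ∧ h.oth ∈ Y ∧ g.oth ∈ Y := by
    intro h g hne
    obtain ⟨Y, h1, h2, h3, h4⟩ :=
      hcon' h.edge g.edge h.sel g.sel hne h.endpt_eq g.endpt_eq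
    rw [Ends.other_eq, Ends.other_eq] at h4
    exact ⟨Y, h1, h2, h3, h4⟩
  by_cases hloop : ∃ h : G.Ends v, h.oth = v
  · obtain ⟨h, hh⟩ := hloop
    obtain ⟨g, hg⟩ : ∃ g : G.Ends v, g.edge ≠ h.edge := by
      by_contra hall
      push_neg at hall
      have c1 : Fintype.card {e : G.E // G.fst e = v} ≤ 1 := by
        rw [Fintype.card_le_one_iff]
        intro a b
        have ha := hall (Sum.inl a); have hb := hall (Sum.inl b)
        simp only [Ends.edge, Sum.elim_inl] at ha hb
        exact Subtype.ext (ha.trans hb.symm)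
      have c2 : Fintype.card {e : G.E // G.snd e = v} ≤ 1 := by
        rw [Fintype.card_le_one_iff]
        intro a b
        have ha := hall (Sum.inr a); have hb := hall (Sum.inr b)
        simp only [Ends.edge, Sum.elim_inr] at ha hb
        exact Subtype.ext (ha.trans hb.symm)
      have : G.degree v ≤ 2 := by
        unfold degree
        rw [Nat.card_eq_fintype_card, Nat.card_eq_fintype_card]
        omega
      omega
    obtain ⟨Y, _, hvY, _, hoY, _⟩ := hcon h g (fun he => hg he.symm)
    exact hvY (hh ▸ hoY)
  · push_neg at hloop
    -- `edge` is injective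
    have hinj : Function.Injective (Ends.edge (G := G) (v := v)) := by
      intro a b hab
      cases a with
      | inl x =>
        cases b with
        | inl y => exact congrArg Sum.inl (Subtype.ext hab)
        | inr y =>
          exfalso
          apply hloop (Sum.inl x)
          simp only [Ends.edge, Sum.elim_inl, Sum.elim_inr] at hab
          simp only [Ends.oth, Sum.elim_inl]
          rw [hab]; exact y.2
      | inr x =>
        cases b with
        | inl y =>
          exfalso
          apply hloop (Sum.inr x)
          simp only [Ends.edge, Sum.elim_inl, Sum.elim_inr] at hab
          simp only [Ends.oth, Sum.elim_inr]
          rw [hab]; exact y.2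
        | inr y => exact congrArg Sum.inr (Subtype.ext hab)
    obtain ⟨f⟩ : Nonempty (Fin 4 ↪ G.Ends v) := by
      apply Function.Embedding.nonempty_of_card_le
      rw [← Nat.card_eq_fintype_card (α := G.Ends v), Ends.card_eq]
      simpa using hd
    have hfne : ∀ i j : Fin 4, i ≠ j → (f i).edge ≠ (f j).edge := by
      intro i j hij he
      exact hij (f.injective (hinj he))
    obtain ⟨Y01, hY01ne, hY01v, hY01c, h0Y01, h1Y01⟩ :=
      hcon (f 0) (f 1) (hfne 0 1 (by decide))
    obtain ⟨Y02, hY02ne, hY02v, hY02c, h0Y02, h2Y02⟩ :=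
      hcon (f 0) (f 2) (hfne 0 2 (by decide))
    obtain ⟨Y23, hY23ne, hY23v, hY23c, h2Y23, h3Y23⟩ :=
      hcon (f 2) (f 3) (hfne 2 3 (by decide))
    have hU1 : G.cut (Y01 ∪ Y02) = 3 :=
      union_tight hG ⟨(f 0).oth, h0Y01, h0Y02⟩ hY01v hY02v hY01c hY02c
    have hU1v : v ∉ Y01 ∪ Y02 := fun h => h.elim hY01v hY02v
    have hU : G.cut ((Y01 ∪ Y02) ∪ Y23) = 3 :=
      union_tight hG ⟨(f 2).oth, Or.inr h2Y02, h2Y23⟩ hU1v hY23v hU1 hY23c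
    set U : Set G.V := (Y01 ∪ Y02) ∪ Y23 with hUdef
    have hUv : v ∉ U := fun h => h.elim hU1v hY23v
    have hcr : ∀ i : Fin 4, G.Crosses U (f i).edge := by
      intro i
      apply Ends.crosses _ hUv
      fin_cases i
      · exact Or.inl (Or.inl h0Y01)
      · exact Or.inl (Or.inl h1Y01)
      · exact Or.inl (Or.inr h2Y02)
      · exact Or.inr h3Y23
    have hsub : ({(f 0).edge, (f 1).edge, (f 2).edge, (f 3).edge} : Finset G.E)
        ⊆ Finset.univ.filter (fun e => G.Crosses U e) := by
      intro x hx
      simp only [Finset.mem_insert, Finset.mem_singleton] at hx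
      rcases hx with rfl | rfl | rfl | rfl <;>
        · simp only [Finset.mem_filter, Finset.mem_univ, true_and]
          first
            | exact hcr 0
            | exact hcr 1
            | exact hcr 2
            | exact hcr 3
    have hcard : ({(f 0).edge, (f 1).edge, (f 2).edge, (f 3).edge} : Finset G.E).card = 4 := by
      rw [Finset.card_insert_of_notMem
          (by simp [hfne 0 1 (by decide), hfne 0 2 (by decide), hfne 0 3 (by decide)]),
        Finset.card_insert_of_notMem
          (by simp [hfne 1 2 (by decide), hfne 1 3 (by decide)]),
        Finset.card_insert_of_notMem (by simp [hfne 2 3 (by decide)]),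
        Finset.card_singleton]
    have : 4 ≤ G.cut U := by
      rw [← hcard]
      exact Finset.card_le_card hsub
    omega

lemma IsIsoTo.trans {G H K : Multigraph} (h1 : IsIsoTo G H) (h2 : IsIsoTo H K) :
    IsIsoTo G K := by
  obtain ⟨fV, fE, hf⟩ := h1
  obtain ⟨gV, gE, hg⟩ := h2
  refine ⟨fV.trans gV, fE.trans gE, fun e => ?_⟩
  have h1 := hf e
  have h2 := hg (fE e)
  simp only [Equiv.trans_apply]
  rcases h1 with ⟨ha, hb⟩ | ⟨ha, hb⟩ <;> rcases h2 with ⟨hc, hd⟩ | ⟨hc, hd⟩ <;>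
    [left; right; right; left] <;>
    constructor <;> (first | rw [hc, ha] | rw [hd, hb] | rw [hc, hb] | rw [hd, ha])

/-- contracting nothing -/
lemma contractCompl_univ_iso : IsIsoTo (G.contractCompl Set.univ) G := by
  have hno : ∀ a b : G.V, ¬ (G.deleteEdges (Set.univ : Set G.E)).Adj a b := by
    rintro a b ⟨e, _⟩
    exact e.2 (Set.mem_univ e.1)
  refine ⟨⟨Quot.lift id (fun a b hab => absurd hab (hno a b)), fun u => Quot.mk _ u, ?_, ?_⟩,
    Equiv.Set.univ G.E, fun e => Or.inl ⟨rfl, rfl⟩⟩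
  · intro q
    induction q using Quot.ind with
    | _ a => rfl
  · intro u
    rfl

/-- the composition lemma: a contraction of a contraction of `H` is (up to iso)
a contraction of `H`. -/
lemma comp_contract {H K : Multigraph} {S : Set H.E}
    (hiso : IsIsoTo (H.contractCompl S) K) (T : Set K.E) :
    ∃ S' : Set H.E, IsIsoTo (H.contractCompl S') (K.contractCompl T) := by
  obtain ⟨fV, fE, hc⟩ := hiso
  classical
  refine ⟨{e : H.E | ∃ h : e ∈ S, fE ⟨e, h⟩ ∈ T}, ?_⟩
  set S' : Set H.E := {e : H.E | ∃ h : e ∈ S, fE ⟨e, h⟩ ∈ T} with hS'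
  have hsub : S' ⊆ S := fun e he => he.1
  have hdsound : ∀ a b : H.V, (H.deleteEdges S').Adj a b →
      Quot.mk (K.deleteEdges T).Adj (fV (Quot.mk (H.deleteEdges S).Adj a))
        = Quot.mk (K.deleteEdges T).Adj (fV (Quot.mk (H.deleteEdges S).Adj b)) := by
    rintro a b ⟨⟨e, he⟩, hor⟩
    by_cases heS : e ∈ S
    · have hT : fE ⟨e, heS⟩ ∉ T := fun ht => he ⟨heS, ht⟩
      have hcc := hc ⟨e, heS⟩
      have hadj : (K.deleteEdges T).Adj (fV (Quot.mk _ (H.fst e))) (fV (Quot.mk _ (H.snd e))) := by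
        refine ⟨⟨fE ⟨e, heS⟩, hT⟩, ?_⟩
        rcases hcc with ⟨h1, h2⟩ | ⟨h1, h2⟩
        · exact Or.inl ⟨h1, h2⟩
        · exact Or.inr ⟨h1, h2⟩
      have key := Quot.sound hadj
      rcases hor with ⟨h1, h2⟩ | ⟨h1, h2⟩
      · rw [← h1, ← h2]; exact key
      · rw [← h1, ← h2]; exact key.symm
    · have key : Quot.mk (H.deleteEdges S).Adj (H.fst e) = Quot.mk _ (H.snd e) :=
        Quot.sound ⟨⟨e, heS⟩, Or.inl ⟨rfl, rfl⟩⟩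
      rcases hor with ⟨h1, h2⟩ | ⟨h1, h2⟩
      · rw [← h1, ← h2]; exact congrArg (fun q => Quot.mk _ (fV q)) key
      · rw [← h1, ← h2]; exact (congrArg (fun q => Quot.mk _ (fV q)) key).symm
  have hupsound : ∀ a b : H.V, (H.deleteEdges S).Adj a b →
      Quot.mk (H.deleteEdges S').Adj a = Quot.mk (H.deleteEdges S').Adj b := by
    rintro a b ⟨⟨e, he⟩, hor⟩
    exact Quot.sound ⟨⟨e, fun h => he (hsub h)⟩, hor⟩
  have hgsound : ∀ k₁ k₂ : K.V, (K.deleteEdges T).Adj k₁ k₂ →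
      Quot.lift (Quot.mk (H.deleteEdges S').Adj) hupsound (fV.symm k₁)
        = Quot.lift (Quot.mk (H.deleteEdges S').Adj) hupsound (fV.symm k₂) := by
    rintro k₁ k₂ ⟨⟨f, hf⟩, hor⟩
    have hfe : fE (fE.symm f) = f := fE.apply_symm_apply f
    have he' : (fE.symm f).1 ∉ S' := by
      rintro ⟨h, ht⟩
      have heq : (⟨(fE.symm f).1, h⟩ : ↥S) = fE.symm f := Subtype.ext rfl
      rw [heq, hfe] at ht
      exact hf ht
    have key : Quot.mk (H.deleteEdges S').Adj (H.fst (fE.symm f).1)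
        = Quot.mk (H.deleteEdges S').Adj (H.snd (fE.symm f).1) :=
      Quot.sound ⟨⟨(fE.symm f).1, he'⟩, Or.inl ⟨rfl, rfl⟩⟩
    have hcc := hc (fE.symm f)
    rw [hfe] at hcc
    have hfsteq : (H.contractCompl S).fst (fE.symm f)
        = Quot.mk (H.deleteEdges S).Adj (H.fst (fE.symm f).1) := rfl
    have hsndeq : (H.contractCompl S).snd (fE.symm f)
        = Quot.mk (H.deleteEdges S).Adj (H.snd (fE.symm f).1) := rfl
    rcases hcc with ⟨h1, h2⟩ | ⟨h1, h2⟩ <;> rcases hor with ⟨g1, g2⟩ | ⟨g1, g2⟩ <;>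
      [(have G1 : K.fst f = k₁ := g1; have G2 : K.snd f = k₂ := g2);
       (have G1 : K.fst f = k₂ := g1; have G2 : K.snd f = k₁ := g2);
       (have G1 : K.fst f = k₁ := g1; have G2 : K.snd f = k₂ := g2);
       (have G1 : K.fst f = k₂ := g1; have G2 : K.snd f = k₁ := g2)]
    · rw [← G1, ← G2, h1, h2, hfsteq, hsndeq]
      erw [fV.symm_apply_apply, fV.symm_apply_apply]
      exact key
    · rw [← G1, ← G2, h1, h2, hfsteq, hsndeq]
      erw [fV.symm_apply_apply, fV.symm_apply_apply]
      exact key.symm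
    · rw [← G1, ← G2, h1, h2, hfsteq, hsndeq]
      erw [fV.symm_apply_apply, fV.symm_apply_apply]
      exact key.symm
    · rw [← G1, ← G2, h1, h2, hfsteq, hsndeq]
      erw [fV.symm_apply_apply, fV.symm_apply_apply]
      exact key
  have hmemT : ∀ x : ↥S', fE ⟨x.1, hsub x.2⟩ ∈ T := by
    rintro ⟨e, h, ht⟩
    exact ht
  refine ⟨⟨Quot.lift (fun x : H.V => Quot.mk (K.deleteEdges T).Adj (fV (Quot.mk (H.deleteEdges S).Adj x))) hdsound,
      Quot.lift (fun k : K.V => Quot.lift (Quot.mk (H.deleteEdges S').Adj) hupsound (fV.symm k)) hgsound,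
      ?_, ?_⟩,
    ⟨fun x : ↥S' => (⟨fE ⟨x.1, hsub x.2⟩, hmemT x⟩ : ↥T),
     fun t : ↥T => (⟨(fE.symm t.1).1, (fE.symm t.1).2, by
        rw [show (⟨(fE.symm t.1).1, (fE.symm t.1).2⟩ : ↥S) = fE.symm t.1 from Subtype.ext rfl,
          fE.apply_symm_apply]
        exact t.2⟩ : ↥S'),
     ?_, ?_⟩, ?_⟩
  · intro q
    induction q using Quot.ind with
    | _ a =>
      show Quot.lift (Quot.mk (H.deleteEdges S').Adj) hupsound
        (fV.symm (fV (Quot.mk (H.deleteEdges S).Adj a))) = Quot.mk (H.deleteEdges S').Adj a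
      erw [fV.symm_apply_apply]
  · intro q
    induction q using Quot.ind with
    | _ k =>
      obtain ⟨a, ha⟩ := Quot.exists_rep (fV.symm k)
      show Quot.lift _ hdsound (Quot.lift (Quot.mk (H.deleteEdges S').Adj) hupsound (fV.symm k))
        = Quot.mk (K.deleteEdges T).Adj k
      rw [← ha]
      show Quot.mk (K.deleteEdges T).Adj (fV (Quot.mk (H.deleteEdges S).Adj a))
        = Quot.mk (K.deleteEdges T).Adj k
      rw [ha]
      erw [fV.apply_symm_apply]
  · intro x
    apply Subtype.ext
    show (fE.symm (fE ⟨x.1, hsub x.2⟩)).1 = x.1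
    erw [fE.symm_apply_apply]
  · intro t
    apply Subtype.ext
    show fE (fE.symm t.1) = t.1
    rw [fE.apply_symm_apply]
  · intro e'
    have hcc := hc ⟨e'.1, hsub e'.2⟩
    show (Quot.mk (K.deleteEdges T).Adj (K.fst (fE ⟨e'.1, hsub e'.2⟩))
            = Quot.mk _ (fV (Quot.mk (H.deleteEdges S).Adj (H.fst e'.1))) ∧
          Quot.mk (K.deleteEdges T).Adj (K.snd (fE ⟨e'.1, hsub e'.2⟩))
            = Quot.mk _ (fV (Quot.mk (H.deleteEdges S).Adj (H.snd e'.1)))) ∨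
         (Quot.mk (K.deleteEdges T).Adj (K.fst (fE ⟨e'.1, hsub e'.2⟩))
            = Quot.mk _ (fV (Quot.mk (H.deleteEdges S).Adj (H.snd e'.1))) ∧
          Quot.mk (K.deleteEdges T).Adj (K.snd (fE ⟨e'.1, hsub e'.2⟩))
            = Quot.mk _ (fV (Quot.mk (H.deleteEdges S).Adj (H.fst e'.1))))
    rcases hcc with ⟨h1, h2⟩ | ⟨h1, h2⟩
    · left
      exact ⟨congrArg _ h1, congrArg _ h2⟩
    · right
      exact ⟨congrArg _ h1, congrArg _ h2⟩



variable {G : Multigraph} {v : G.V} {e₁ e₂ : G.E} {s₁ s₂ : Bool}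

lemma split_cardV : Nat.card (G.split v e₁ e₂ s₁ s₂).V = Nat.card G.V + 1 := by
  show Nat.card (Option G.V) = _
  simp [Nat.card_eq_fintype_card]

lemma split_cardE : Nat.card (G.split v e₁ e₂ s₁ s₂).E = Nat.card G.E + 1 := by
  show Nat.card (Option G.E) = _
  simp [Nat.card_eq_fintype_card]

lemma split_b1 (hc : G.Connected) (hc' : (G.split v e₁ e₂ s₁ s₂).Connected) :
    (G.split v e₁ e₂ s₁ s₂).b1 = G.b1 := by
  unfold b1
  rw [numComponents_eq_one hc, numComponents_eq_one hc', split_cardV, split_cardE]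
  push_cast
  ring

/-- contracting the new edge of a split recovers `G` -/
lemma split_contract_iso (h1 : G.endpt e₁ s₁ = v) (h2 : G.endpt e₂ s₂ = v) :
    IsIsoTo ((G.split v e₁ e₂ s₁ s₂).contractCompl {x : Option G.E | x ≠ none}) G := by
  have hso : ∀ a b : (G.split v e₁ e₂ s₁ s₂).V,
      ((G.split v e₁ e₂ s₁ s₂).deleteEdges {x : Option G.E | x ≠ none}).Adj a b →
      (a : Option G.V).getD v = (b : Option G.V).getD v := by
    rintro a b ⟨⟨x, hx⟩, hor⟩
    have hxn : x = none := not_not.mp hx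
    subst hxn
    rcases hor with ⟨ha, hb⟩ | ⟨ha, hb⟩
    · have ha' : (some v : Option G.V) = a := ha
      have hb' : (none : Option G.V) = b := hb
      rw [← ha', ← hb']
      rfl
    · have ha' : (some v : Option G.V) = b := ha
      have hb' : (none : Option G.V) = a := hb
      rw [← ha', ← hb']
      rfl
  have hadj0 : ((G.split v e₁ e₂ s₁ s₂).deleteEdges {x : Option G.E | x ≠ none}).Adj
      (some v : Option G.V) (none : Option G.V) :=
    ⟨⟨none, fun h => h rfl⟩, Or.inl ⟨rfl, rfl⟩⟩
  refine ⟨⟨Quot.lift (fun x : Option G.V => x.getD v) hso,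
      fun u => Quot.mk _ (some u : Option G.V), ?_, ?_⟩,
    ⟨fun x => (x.1 : Option G.E).get (Option.ne_none_iff_isSome.mp x.2),
     fun e => ⟨(some e : Option G.E), fun h => Option.some_ne_none _ h⟩, ?_, ?_⟩, ?_⟩
  · intro q
    induction q using Quot.ind with
    | _ x =>
      match x with
      | some u => rfl
      | none => exact Quot.sound hadj0
  · intro u
    rfl
  · rintro ⟨x, hx⟩
    apply Subtype.ext
    show (some (Option.get x _) : Option G.E) = x
    exact Option.some_get _
  · intro e
    rfl
  · rintro ⟨x, hx⟩
    obtain ⟨e, rfl⟩ := Option.ne_none_iff_exists'.mp hx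
    left
    constructor
    · show G.fst e =
        ((if G.movedF e₁ e₂ s₁ s₂ e then none else some (G.fst e) : Option G.V)).getD v
      split_ifs with h
      · exact movedF_fst h1 h2 h
      · rfl
    · show G.snd e =
        ((if G.movedS e₁ e₂ s₁ s₂ e then none else some (G.snd e) : Option G.V)).getD v
      split_ifs with h
      · exact movedS_snd h1 h2 h
      · rfl

/-- the main induction -/
lemma main_aux : ∀ n : ℕ, ∀ G : Multigraph, G.Connected → G.EdgeConnected3 →
    (∀ v : G.V, 3 ≤ G.degree v) → 2 * Nat.card G.E ≤ 3 * Nat.card G.V + n →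
    ∃ (H : Multigraph) (S : Set H.E), H.ThreeRegular ∧ H.EdgeConnected3 ∧
      IsIsoTo (H.contractCompl S) G ∧ H.b1 = G.b1 := by
  intro n
  induction n with
  | zero =>
    intro G hc h3 hval hm
    by_cases hreg : ∀ v : G.V, G.degree v = 3
    · exact ⟨G, Set.univ, hreg, h3, contractCompl_univ_iso, rfl⟩
    · exfalso
      push_neg at hreg
      obtain ⟨v, hv⟩ := hreg
      have hlt : 3 * Nat.card G.V < 2 * Nat.card G.E := by
        rw [← handshake]
        calc 3 * Nat.card G.V = ∑ _u : G.V, 3 := by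
              simp [Nat.card_eq_fintype_card, Finset.sum_const, mul_comm]
          _ < ∑ u : G.V, G.degree u := by
              apply Finset.sum_lt_sum (fun i _ => hval i)
              exact ⟨v, Finset.mem_univ v, by have := hval v; omega⟩
      omega
  | succ n ih =>
    intro G hc h3 hval hm
    by_cases hreg : ∀ v : G.V, G.degree v = 3
    · exact ⟨G, Set.univ, hreg, h3, contractCompl_univ_iso, rfl⟩
    · push_neg at hreg
      obtain ⟨v, hv⟩ := hreg
      have hd : 4 ≤ G.degree v := by have := hval v; omega
      have hGcut : ∀ X : Set G.V, X.Nonempty → X ≠ Set.univ → 3 ≤ G.cut X :=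
        fun X h1 h2 => cut_ge_of_ec3 h3 X h1 h2
      obtain ⟨e₁, e₂, s₁, s₂, hne, h1, h2, hsafe⟩ := exists_safe_pair hGcut v hd
      have hcut' := split_cut_ge hne h1 h2 hGcut hsafe
      have hec3' : (G.split v e₁ e₂ s₁ s₂).EdgeConnected3 :=
        ec3_of_cut ⟨(none : Option G.V)⟩ hcut'
      have hconn' : (G.split v e₁ e₂ s₁ s₂).Connected :=
        ⟨⟨(none : Option G.V)⟩, preconnected_of_ec3 hec3'⟩
      have hval' : ∀ u : (G.split v e₁ e₂ s₁ s₂).V, 3 ≤ (G.split v e₁ e₂ s₁ s₂).degree u := by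
        intro u
        match u with
        | none => rw [split_degree_none hne]
        | some u =>
          by_cases hu : u = v
          · have hdv := split_degree_v hne h1 h2
            have hv4 := hval v
            rw [hu]
            omega
          · rw [split_degree_some h1 h2 hu]
            exact hval u
      have hm' : 2 * Nat.card (G.split v e₁ e₂ s₁ s₂).E
          ≤ 3 * Nat.card (G.split v e₁ e₂ s₁ s₂).V + n := by
        rw [split_cardV, split_cardE]
        omega
      obtain ⟨H, S, h3r, hec3H, hiso, hb1⟩ :=
        ih (G.split v e₁ e₂ s₁ s₂) hconn' hec3' hval' hm'
      obtain ⟨S', hiso'⟩ := comp_contract hiso {x : Option G.E | x ≠ none}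
      refine ⟨H, S', h3r, hec3H, hiso'.trans (split_contract_iso h1 h2), ?_⟩
      rw [hb1, split_b1 hc hconn']



end Multigraph


/-- Every connected 3-edge connected graph of minimal valence ≥ 3
is obtained by edge contractions from a 3-regular, 3-edge connected graph with the
same first Betti number. -/
theorem exists_threeRegular_contraction (G : Multigraph) (hc : G.Connected)
    (h3 : G.EdgeConnected3) (hval : ∀ v : G.V, 3 ≤ G.degree v) :
    ∃ (H : Multigraph) (S : Set H.E), H.ThreeRegular ∧ H.EdgeConnected3 ∧
      Multigraph.IsIsoTo (H.contractCompl S) G ∧ H.b1 = G.b1 :=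
  Multigraph.main_aux (2 * Nat.card G.E) G hc h3 hval (by omega)
end
end

section
/- For a finite connected graph Γ, the set SP_Γ of subsets S ⊆ E(Γ) such that Γ∖S has no separating edges, ordered by reverse inclusion, coincides with the set of flats of the cographic matroid M*(Γ): a subset T ⊆ E(Γ) is a flat of M*(Γ) if and only if Γ∖T has no separating edges. -/
/-! Basic theory of finite multigraphs (loops and multiple edges allowed),
following Caporaso–Viviani, "Torelli theorem for graphs and tropical curves". -/

noncomputable section

open scoped Classical

namespace Multigraph

variable (G : Multigraph)

-- ### auxiliary lemmas

lemma adj_deleteEdges_iff (S : Set G.E) (v w : G.V) :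
    (G.deleteEdges S).Adj v w ↔
      ∃ d : G.E, d ∉ S ∧ ((G.fst d = v ∧ G.snd d = w) ∨ (G.fst d = w ∧ G.snd d = v)) := by
  constructor
  · rintro ⟨⟨d, hd⟩, h⟩; exact ⟨d, hd, h⟩
  · rintro ⟨d, hd, h⟩; exact ⟨⟨d, hd⟩, h⟩

lemma reach_nested (T : Set G.E) (e' : (G.deleteEdges T).E) (v w : G.V) :
    ((G.deleteEdges T).deleteEdges {e'}).Reachable v w ↔
      (G.deleteEdges (T ∪ {e'.1})).Reachable v w := by
  have key : ∀ a b : G.V, ((G.deleteEdges T).deleteEdges {e'}).Adj a b ↔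
      (G.deleteEdges (T ∪ {e'.1})).Adj a b := by
    intro a b
    constructor
    · rintro ⟨⟨⟨d, hdT⟩, hne⟩, h⟩
      refine ⟨⟨d, ?_⟩, h⟩
      rintro (h1 | h2)
      · exact hdT h1
      · exact hne (Set.mem_singleton_iff.mpr (Subtype.ext h2))
    · rintro ⟨⟨d, hd⟩, h⟩
      refine ⟨⟨⟨d, fun h1 => hd (Or.inl h1)⟩, ?_⟩, h⟩
      intro h2
      replace h2 := Set.mem_singleton_iff.mp h2
      exact hd (Or.inr (congrArg Subtype.val h2))
  constructor
  · exact Relation.ReflTransGen.mono (fun a b h => (key a b).1 h) v w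
  · exact Relation.ReflTransGen.mono (fun a b h => (key a b).2 h) v w

/-- sign for an edge with given endpoints -/
lemma exists_sign (o : G.E → Bool) (d : G.E) (b c : G.V)
    (h : (G.fst d = b ∧ G.snd d = c) ∨ (G.fst d = c ∧ G.snd d = b)) :
    ∃ s : ℝ, (s = 1 ∨ s = -1) ∧ ∀ u : G.V,
      s * G.incR o d u = (if c = u then 1 else 0) - (if b = u then 1 else 0) := by
  by_cases ho : o d
  · rcases h with ⟨h1, h2⟩ | ⟨h1, h2⟩
    · refine ⟨1, Or.inl rfl, fun u => ?_⟩
      simp [incR, inc, src, tgt, ho, h1, h2]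
    · refine ⟨-1, Or.inr rfl, fun u => ?_⟩
      simp [incR, inc, src, tgt, ho, h1, h2]
  · rcases h with ⟨h1, h2⟩ | ⟨h1, h2⟩
    · refine ⟨-1, Or.inr rfl, fun u => ?_⟩
      simp [incR, inc, src, tgt, ho, h1, h2]
    · refine ⟨1, Or.inl rfl, fun u => ?_⟩
      simp [incR, inc, src, tgt, ho, h1, h2]

/-- From a walk in `Γ∖S` from `v` to `w`, get a 1-chain supported off `S` with
boundary `δ_w - δ_v`. -/
lemma exists_chain (o : G.E → Bool) (S : Set G.E) (v w : G.V)
    (h : (G.deleteEdges S).Reachable v w) :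
    ∃ f : G.E → ℝ, (∀ t ∈ S, f t = 0) ∧
      ∀ u, ∑ d, f d * G.incR o d u =
        (if w = u then 1 else 0) - (if v = u then 1 else 0) := by
  induction h with
  | refl => exact ⟨0, by simp, by simp⟩
  | @tail b c _ hbc ih =>
    obtain ⟨f, hfS, hf⟩ := ih
    obtain ⟨⟨d, hdS⟩, hd⟩ := hbc
    obtain ⟨s, _, hs⟩ := G.exists_sign o d b c hd
    refine ⟨fun x => f x + (if x = d then s else 0), ?_, ?_⟩
    · intro t ht
      have : t ≠ d := fun h => hdS (h ▸ ht)
      simp [hfS t ht, this]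
    · intro u
      have : ∑ x, (f x + (if x = d then s else 0)) * G.incR o x u
          = (∑ x, f x * G.incR o x u) + ∑ x, (if x = d then s * G.incR o x u else 0) := by
        rw [← Finset.sum_add_distrib]
        congr 1; funext x
        by_cases hx : x = d <;> simp [hx, add_mul]
      rw [this, hf u, Finset.sum_ite_eq' Finset.univ d, if_pos (Finset.mem_univ d), hs u]
      ring

/-- If `e ∉ T` is not separating in `Γ∖T`, then `e*` is not in the span. -/
lemma not_mem_span_of_not_sep (o : G.E → Bool) (T : Set G.E) (e : G.E) (he : e ∉ T)
    (hns : (G.deleteEdges (T ∪ {e})).Reachable (G.fst e) (G.snd e)) :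
    G.edgeFunR o e ∉ Submodule.span ℝ (G.edgeFunR o '' T) := by
  obtain ⟨f, hfS, hf⟩ := G.exists_chain o (T ∪ {e}) _ _ hns
  obtain ⟨s, hs1, hs⟩ := G.exists_sign o e (G.snd e) (G.fst e) (Or.inr ⟨rfl, rfl⟩)
  set g : G.E → ℝ := fun x => f x + (if x = e then s else 0) with hg
  have hgmem : g ∈ G.cycleSpaceR o := by
    intro u
    have : ∑ x, (f x + (if x = e then s else 0)) * G.incR o x u
        = (∑ x, f x * G.incR o x u) + ∑ x, (if x = e then s * G.incR o x u else 0) := by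
      rw [← Finset.sum_add_distrib]
      congr 1; funext x
      by_cases hx : x = e <;> simp [hx, add_mul]
    rw [hg]
    rw [this, hf u, Finset.sum_ite_eq' Finset.univ e, if_pos (Finset.mem_univ e), hs u]
    ring
  have hgT : ∀ t ∈ T, g t = 0 := by
    intro t ht
    have hne : t ≠ e := fun h => he (h ▸ ht)
    simp [hg, hfS t (Or.inl ht), hne]
  have hge : g e = s := by simp [hg, hfS e (Or.inr rfl)]
  intro hmem
  have hle : Submodule.span ℝ (G.edgeFunR o '' T)
      ≤ LinearMap.ker (Module.Dual.eval ℝ ↥(G.cycleSpaceR o) ⟨g, hgmem⟩) := by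
    rw [Submodule.span_le]
    rintro φ ⟨t, ht, rfl⟩
    simp only [SetLike.mem_coe, LinearMap.mem_ker, Module.Dual.eval_apply]
    simpa [edgeFunR] using hgT t ht
  have h0 := hle hmem
  simp only [LinearMap.mem_ker, Module.Dual.eval_apply] at h0
  have : g e = 0 := by simpa [edgeFunR] using h0
  rw [hge] at this
  rcases hs1 with h | h <;> simp [h] at this

/-- If `e ∉ T` is separating in `Γ∖T`, then `e*` is in the span. -/
lemma mem_span_of_sep (o : G.E → Bool) (T : Set G.E) (e : G.E) (he : e ∉ T)
    (hsep : ¬ (G.deleteEdges (T ∪ {e})).Reachable (G.fst e) (G.snd e)) :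
    G.edgeFunR o e ∈ Submodule.span ℝ (G.edgeFunR o '' T) := by
  rw [← Subspace.dualCoannihilator_dualAnnihilator_eq
    (W := Submodule.span ℝ (G.edgeFunR o '' T))]
  rw [Submodule.mem_dualAnnihilator]
  rintro ⟨x, hx⟩ hxW
  rw [Submodule.mem_dualCoannihilator] at hxW
  have hxT : ∀ t ∈ T, x t = 0 := by
    intro t ht
    have := hxW _ (Submodule.subset_span (Set.mem_image_of_mem _ ht))
    simpa [edgeFunR] using this
  -- now the graph argument: x e = 0
  set A : Set G.V := {v | (G.deleteEdges (T ∪ {e})).Reachable (G.fst e) v} with hA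
  have hAclosed : ∀ a b : G.V, (G.deleteEdges (T ∪ {e})).Adj a b → a ∈ A → b ∈ A :=
    fun a b hab ha => Relation.ReflTransGen.tail ha hab
  have hAsymm : ∀ a b : G.V, (G.deleteEdges (T ∪ {e})).Adj a b → b ∈ A → a ∈ A := by
    intro a b hab hb
    obtain ⟨d, (⟨h1, h2⟩ | ⟨h1, h2⟩)⟩ := hab
    · exact hAclosed b a ⟨d, Or.inr ⟨h1, h2⟩⟩ hb
    · exact hAclosed b a ⟨d, Or.inl ⟨h1, h2⟩⟩ hb
  have hfstA : G.fst e ∈ A := Relation.ReflTransGen.refl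
  have hsndA : G.snd e ∉ A := hsep
  set Af : Finset G.V := Finset.univ.filter (fun v => v ∈ A) with hAf
  have hmemAf : ∀ v, v ∈ Af ↔ v ∈ A := by intro v; simp [hAf]
  have hinner : ∀ d : G.E, ∑ v ∈ Af, G.incR o d v
      = (if G.tgt o d ∈ A then (1:ℝ) else 0) - (if G.src o d ∈ A then 1 else 0) := by
    intro d
    have : ∀ u : G.V, G.incR o d u
        = (if G.tgt o d = u then (1:ℝ) else 0) - (if G.src o d = u then 1 else 0) := by
      intro u
      simp only [incR, inc]
      push_cast [apply_ite (fun z : ℤ => (z : ℝ))]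
      ring
    simp only [this]
    rw [Finset.sum_sub_distrib, Finset.sum_ite_eq, Finset.sum_ite_eq]
    simp [hmemAf]
  have hsum : ∑ d, x d * ((if G.tgt o d ∈ A then (1:ℝ) else 0) - (if G.src o d ∈ A then 1 else 0)) = 0 := by
    have h0 : ∑ v ∈ Af, ∑ d, x d * G.incR o d v = 0 :=
      Finset.sum_eq_zero (fun v _ => hx v)
    rw [Finset.sum_comm] at h0
    calc ∑ d, x d * ((if G.tgt o d ∈ A then (1:ℝ) else 0) - (if G.src o d ∈ A then 1 else 0))
        = ∑ d, ∑ v ∈ Af, x d * G.incR o d v := by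
          refine Finset.sum_congr rfl (fun d _ => ?_)
          rw [← Finset.mul_sum, hinner d]
      _ = 0 := h0
  have hsingle : ∑ d, x d * ((if G.tgt o d ∈ A then (1:ℝ) else 0) - (if G.src o d ∈ A then 1 else 0))
      = x e * ((if G.tgt o e ∈ A then (1:ℝ) else 0) - (if G.src o e ∈ A then 1 else 0)) := by
    refine Finset.sum_eq_single e (fun d _ hde => ?_) (by simp)
    by_cases hdT : d ∈ T
    · simp [hxT d hdT]
    · have hends : (G.fst d = G.src o d ∧ G.snd d = G.tgt o d)
          ∨ (G.fst d = G.tgt o d ∧ G.snd d = G.src o d) := by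
        by_cases hod : o d <;> simp [src, tgt, hod]
      have hadj : (G.deleteEdges (T ∪ {e})).Adj (G.src o d) (G.tgt o d) := by
        refine ⟨⟨d, ?_⟩, ?_⟩
        · rintro (h1 | h2); exact hdT h1; exact hde h2
        · exact hends
      have : (G.tgt o d ∈ A) ↔ (G.src o d ∈ A) :=
        ⟨fun h => hAsymm _ _ hadj h, fun h => hAclosed _ _ hadj h⟩
      by_cases h1 : G.src o d ∈ A <;> simp [h1, this]
  rw [hsingle] at hsum
  have hcoef : (if G.tgt o e ∈ A then (1:ℝ) else 0) - (if G.src o e ∈ A then 1 else 0) = 1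
      ∨ (if G.tgt o e ∈ A then (1:ℝ) else 0) - (if G.src o e ∈ A then 1 else 0) = -1 := by
    by_cases hoe : o e <;> simp [src, tgt, hoe, hfstA, hsndA]
  have hxe : x e = 0 := by
    rcases hcoef with h | h <;> rw [h] at hsum <;> linarith
  simpa [edgeFunR] using hxe

end Multigraph

/-- `T ⊆ E(Γ)` is a flat of the cographic matroid `M*(Γ)` (for every
`e ∉ T`, the span of `{f* : f ∈ T}` is properly contained in the span of
`{f* : f ∈ T} ∪ {e*}`) iff `Γ∖T` has no separating edges. -/
theorem flat_cographic_iff_sepEdges_deleteEdges_empty (G : Multigraph)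
    (hc : G.Connected) (o : G.E → Bool) (T : Set G.E) :
    (∀ e ∉ T,
      Submodule.span ℝ (G.edgeFunR o '' T) <
        Submodule.span ℝ (G.edgeFunR o '' T ∪ {G.edgeFunR o e})) ↔
    (G.deleteEdges T).sepEdges = ∅ := by
  constructor
  · intro h
    rw [Set.eq_empty_iff_forall_notMem]
    rintro ⟨e, he⟩ hsep
    have hsep' : ¬ (G.deleteEdges (T ∪ {e})).Reachable (G.fst e) (G.snd e) := by
      rw [← G.reach_nested T ⟨e, he⟩]
      exact hsep
    have hmem := G.mem_span_of_sep o T e he hsep'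
    have hle : Submodule.span ℝ (G.edgeFunR o '' T ∪ {G.edgeFunR o e})
        ≤ Submodule.span ℝ (G.edgeFunR o '' T) := by
      rw [Submodule.span_le]
      rintro φ (hφ | hφ)
      · exact Submodule.subset_span hφ
      · rw [Set.mem_singleton_iff] at hφ
        rw [hφ]
        exact hmem
    exact absurd (le_antisymm (h e he).le hle) (h e he).ne
  · intro h e he
    have hns : ¬ (G.deleteEdges T).IsSeparating ⟨e, he⟩ := by
      rw [Set.eq_empty_iff_forall_notMem] at h
      exact h ⟨e, he⟩
    have hr : (G.deleteEdges (T ∪ {e})).Reachable (G.fst e) (G.snd e) := by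
      rw [← G.reach_nested T ⟨e, he⟩]
      exact not_not.mp hns
    have hnotmem := G.not_mem_span_of_not_sep o T e he hr
    refine lt_of_le_of_ne (Submodule.span_mono Set.subset_union_left) ?_
    intro heq
    have hm : G.edgeFunR o e ∈ Submodule.span ℝ (G.edgeFunR o '' T ∪ {G.edgeFunR o e}) :=
      Submodule.subset_span (Set.mem_union_right _ rfl)
    rw [← heq] at hm
    exact hnotmem hm
end
end

section
/- The poset SP_Γ of subsets S ⊆ E(Γ) with Γ∖S free of separating edges, ordered by S ≥ T ⇔ S ⊆ T, is a graded poset with minimum element E(Γ) and normalized rank function S ↦ b₁(Γ∖S). -/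
/-! Basic theory of finite multigraphs (loops and multiple edges allowed),
following Caporaso–Viviani, "Torelli theorem for graphs and tropical curves". -/

noncomputable section

open scoped Classical

namespace Multigraph
variable (G : Multigraph)

/-- Reachability in `Γ∖S` as a relation on `G.V`. -/
def R (S : Set G.E) : G.V → G.V → Prop := (G.deleteEdges S).Reachable

variable {G}

lemma adj_del_iff {S : Set G.E} {v w : G.V} :
    (G.deleteEdges S).Adj v w ↔
      ∃ e, e ∉ S ∧ ((G.fst e = v ∧ G.snd e = w) ∨ (G.fst e = w ∧ G.snd e = v)) := by
  constructor
  · rintro ⟨⟨e, he⟩, h⟩; exact ⟨e, he, h⟩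
  · rintro ⟨e, he, h⟩; exact ⟨⟨e, he⟩, h⟩

lemma adj_del_symm {S : Set G.E} {v w : G.V} (h : (G.deleteEdges S).Adj v w) :
    (G.deleteEdges S).Adj w v := by
  rw [adj_del_iff] at h ⊢
  obtain ⟨e, he, h⟩ := h
  exact ⟨e, he, h.symm⟩

lemma R_symm {S : Set G.E} {v w : G.V} (h : G.R S v w) : G.R S w v :=
  (@Relation.ReflTransGen.symmetric _ _ ⟨fun _ _ => adj_del_symm⟩).symm _ _ h

lemma R_mono {S T : Set G.E} (hST : S ⊆ T) {v w : G.V} (h : G.R T v w) : G.R S v w := by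
  refine Relation.ReflTransGen.mono ?_ _ _ h
  intro a b hab
  replace hab := adj_del_iff.1 hab
  refine adj_del_iff.2 ?_
  obtain ⟨e, he, h⟩ := hab
  exact ⟨e, fun hm => he (hST hm), h⟩

lemma adj_R {S : Set G.E} {v w : G.V} (h : (G.deleteEdges S).Adj v w) : G.R S v w :=
  Relation.ReflTransGen.single h

lemma mk_eq_iff {S : Set G.E} {v w : G.V} :
    Quot.mk (G.deleteEdges S).Adj v = Quot.mk (G.deleteEdges S).Adj w ↔ G.R S v w := by
  constructor
  · intro h
    have h' := Quot.eqvGen_exact h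
    clear h
    induction h' with
    | rel a b hab => exact adj_R hab
    | refl a => exact Relation.ReflTransGen.refl
    | symm a b _ ih => exact R_symm ih
    | trans a b c _ _ ih1 ih2 => exact ih1.trans ih2
  · intro h
    induction h with
    | refl => rfl
    | tail _ hab ih => exact ih.trans (Quot.sound hab)

lemma cardE_step {S : Set G.E} {e : G.E} (he : e ∉ S) :
    Nat.card (G.deleteEdges S).E = Nat.card (G.deleteEdges (S ∪ {e})).E + 1 := by
  have h1 : Nat.card (G.deleteEdges S).E = ({f | f ∉ S} : Set G.E).ncard :=
    Nat.card_coe_set_eq _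
  have h2 : Nat.card (G.deleteEdges (S ∪ {e})).E = ({f | f ∉ S ∪ {e}} : Set G.E).ncard :=
    Nat.card_coe_set_eq _
  have h3 : ({f | f ∉ S ∪ {e}} : Set G.E) = {f | f ∉ S} \ {e} := by
    ext f
    simp only [Set.mem_setOf_eq, Set.mem_union, Set.mem_singleton_iff, Set.mem_diff, not_or]
  have h4 := Set.ncard_diff_singleton_add_one (show e ∈ {f | f ∉ S} from he) (Set.toFinite _)
  rw [h1, h2, h3]
  omega

lemma numComponents_nonsep {S : Set G.E} {e : G.E} (he : e ∉ S)
    (h : G.R (S ∪ {e}) (G.fst e) (G.snd e)) :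
    (G.deleteEdges S).numComponents = (G.deleteEdges (S ∪ {e})).numComponents := by
  have key : ∀ v w : G.V, G.R S v w ↔ G.R (S ∪ {e}) v w := by
    intro v w
    constructor
    · intro hr
      induction hr with
      | refl => exact Relation.ReflTransGen.refl
      | tail _ hab ih =>
        refine ih.trans ?_
        rw [adj_del_iff] at hab
        obtain ⟨f, hf, hfab⟩ := hab
        by_cases hfe : f = e
        · subst hfe
          rcases hfab with ⟨h1, h2⟩ | ⟨h1, h2⟩
          · rw [← h1, ← h2]; exact h
          · rw [← h1, ← h2]; exact R_symm h
        · exact adj_R (adj_del_iff.2 ⟨f, by simp [hf, hfe], hfab⟩)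
    · exact R_mono Set.subset_union_left
  unfold numComponents
  refine Nat.card_congr ?_
  refine ⟨Quot.lift (Quot.mk _) ?_, Quot.lift (Quot.mk _) ?_, ?_, ?_⟩
  · intro a b hab
    exact mk_eq_iff.2 ((key a b).1 (adj_R hab))
  · intro a b hab
    exact mk_eq_iff.2 ((key a b).2 (adj_R hab))
  · intro x; induction x using Quot.ind; rfl
  · intro x; induction x using Quot.ind; rfl

lemma R_union_cases {S : Set G.E} {e : G.E} {v w : G.V} (h : G.R S v w) :
    G.R (S ∪ {e}) v w ∨
      (G.R (S ∪ {e}) v (G.fst e) ∧ G.R (S ∪ {e}) (G.snd e) w) ∨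
      (G.R (S ∪ {e}) v (G.snd e) ∧ G.R (S ∪ {e}) (G.fst e) w) := by
  induction h with
  | refl => exact Or.inl Relation.ReflTransGen.refl
  | @tail b c _ hab ih =>
    rw [adj_del_iff] at hab
    obtain ⟨f, hf, hfab⟩ := hab
    by_cases hfe : f = e
    · subst hfe
      rcases hfab with ⟨h1, h2⟩ | ⟨h1, h2⟩
      · -- fst f = b, snd f = c
        subst h1; subst h2
        rcases ih with ih | ⟨ih1, ih2⟩ | ⟨ih1, ih2⟩
        · exact Or.inr (Or.inl ⟨ih, Relation.ReflTransGen.refl⟩)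
        · exact Or.inr (Or.inl ⟨ih1, Relation.ReflTransGen.refl⟩)
        · exact Or.inl ih1
      · -- fst f = c, snd f = b
        subst h1; subst h2
        rcases ih with ih | ⟨ih1, ih2⟩ | ⟨ih1, ih2⟩
        · exact Or.inr (Or.inr ⟨ih, Relation.ReflTransGen.refl⟩)
        · exact Or.inl ih1
        · exact Or.inr (Or.inr ⟨ih1, Relation.ReflTransGen.refl⟩)
    · have step : G.R (S ∪ {e}) b c := adj_R (adj_del_iff.2 ⟨f, by simp [hf, hfe], hfab⟩)
      rcases ih with ih | ⟨ih1, ih2⟩ | ⟨ih1, ih2⟩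
      · exact Or.inl (ih.trans step)
      · exact Or.inr (Or.inl ⟨ih1, ih2.trans step⟩)
      · exact Or.inr (Or.inr ⟨ih1, ih2.trans step⟩)

lemma numComponents_sep {S : Set G.E} {e : G.E} (he : e ∉ S)
    (h : ¬ G.R (S ∪ {e}) (G.fst e) (G.snd e)) :
    (G.deleteEdges (S ∪ {e})).numComponents = (G.deleteEdges S).numComponents + 1 := by
  set S' := S ∪ {e} with hS'
  set A := (G.deleteEdges S).Adj
  set A' := (G.deleteEdges S').Adj
  have hq : ∀ a b : G.V, A' a b → Quot.mk A a = Quot.mk A b := by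
    intro a b hab
    exact mk_eq_iff.2 (R_mono Set.subset_union_left (adj_R hab))
  set q : Quot A' → Quot A := Quot.lift (Quot.mk A) hq with hqdef
  have hqmk : ∀ v : G.V, q (Quot.mk A' v) = Quot.mk A v := fun v => rfl
  have hab_ne : Quot.mk A' (G.fst e) ≠ Quot.mk A' (G.snd e) := by
    intro hcon; exact h (mk_eq_iff.1 hcon)
  have hab_eq : Quot.mk A (G.fst e) = Quot.mk A (G.snd e) := by
    refine mk_eq_iff.2 (adj_R (adj_del_iff.2 ⟨e, he, Or.inl ⟨rfl, rfl⟩⟩))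
  have collision : ∀ x y : Quot A', q x = q y → x = y ∨
      (x = Quot.mk A' (G.fst e) ∧ y = Quot.mk A' (G.snd e)) ∨
      (x = Quot.mk A' (G.snd e) ∧ y = Quot.mk A' (G.fst e)) := by
    intro x y
    induction x using Quot.ind with | _ v =>
    induction y using Quot.ind with | _ w =>
    intro hxy
    change Quot.mk A v = Quot.mk A w at hxy
    have hr : G.R S v w := mk_eq_iff.1 hxy
    rcases R_union_cases (e := e) hr with h1 | ⟨h1, h2⟩ | ⟨h1, h2⟩
    · exact Or.inl (mk_eq_iff.2 h1)
    · exact Or.inr (Or.inl ⟨mk_eq_iff.2 h1, (mk_eq_iff.2 h2).symm⟩)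
    · exact Or.inr (Or.inr ⟨mk_eq_iff.2 h1, (mk_eq_iff.2 h2).symm⟩)
  classical
  set g : Quot A' → Quot A ⊕ Unit :=
    fun x => if x = Quot.mk A' (G.snd e) then Sum.inr () else Sum.inl (q x) with hg
  have hbij : Function.Bijective g := by
    constructor
    · intro x y hxy
      by_cases hx : x = Quot.mk A' (G.snd e) <;> by_cases hy : y = Quot.mk A' (G.snd e) <;>
        simp [hg, hx, hy] at hxy
      · exact hx.trans hy.symm
      · rcases collision x y hxy with h1 | ⟨h1, h2⟩ | ⟨h1, h2⟩
        · exact h1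
        · exact absurd h2 hy
        · exact absurd h1 hx
    · intro z
      rcases z with z | z
      · induction z using Quot.ind with | _ v =>
        by_cases hv : Quot.mk A' v = Quot.mk A' (G.snd e)
        · refine ⟨Quot.mk A' (G.fst e), ?_⟩
          show (if _ then _ else _) = _
          rw [if_neg hab_ne, hqmk]
          congr 1
          rw [hab_eq, ← hqmk (G.snd e), ← hv]
        · refine ⟨Quot.mk A' v, ?_⟩
          show (if _ then _ else _) = _
          rw [if_neg hv]
      · exact ⟨Quot.mk A' (G.snd e), by simp [hg]⟩
  unfold numComponents
  have : Nat.card (Quot A') = Nat.card (Quot A ⊕ Unit) := Nat.card_congr (Equiv.ofBijective g hbij)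
  rw [this, Nat.card_sum]
  simp
  rfl

lemma cardV_del (S : Set G.E) : Nat.card (G.deleteEdges S).V = Nat.card G.V := rfl

lemma b1_step_nonsep {S : Set G.E} {e : G.E} (he : e ∉ S)
    (h : G.R (S ∪ {e}) (G.fst e) (G.snd e)) :
    (G.deleteEdges (S ∪ {e})).b1 + 1 = (G.deleteEdges S).b1 := by
  unfold b1
  rw [cardV_del, cardV_del, numComponents_nonsep he h, cardE_step he]
  push_cast
  ring

lemma b1_step_sep {S : Set G.E} {e : G.E} (he : e ∉ S)
    (h : ¬ G.R (S ∪ {e}) (G.fst e) (G.snd e)) :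
    (G.deleteEdges (S ∪ {e})).b1 = (G.deleteEdges S).b1 := by
  unfold b1
  rw [cardV_del, cardV_del, numComponents_sep he h, cardE_step he]
  push_cast
  ring

lemma b1_step_le {S : Set G.E} {e : G.E} (he : e ∉ S) :
    (G.deleteEdges (S ∪ {e})).b1 ≤ (G.deleteEdges S).b1 := by
  by_cases h : G.R (S ∪ {e}) (G.fst e) (G.snd e)
  · rw [← b1_step_nonsep he h]; omega
  · rw [b1_step_sep he h]

lemma b1_mono {A B : Set G.E} (hAB : A ⊆ B) :
    (G.deleteEdges B).b1 ≤ (G.deleteEdges A).b1 := by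
  have key : ∀ n (A B : Set G.E), (B \ A).ncard ≤ n → A ⊆ B →
      (G.deleteEdges B).b1 ≤ (G.deleteEdges A).b1 := by
    intro n
    induction n with
    | zero =>
      intro A B hc hAB
      have : B \ A = ∅ := by
        rw [← Set.ncard_eq_zero (Set.toFinite _)]; omega
      have hBA : B ⊆ A := by
        intro x hx
        by_contra hxa
        exact absurd (Set.mem_diff_of_mem hx hxa) (by rw [this]; exact id)
      rw [Set.Subset.antisymm hAB hBA]
    | succ n ih =>
      intro A B hc hAB
      by_cases hBA : B ⊆ A
      · rw [Set.Subset.antisymm hAB hBA]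
      · obtain ⟨x, hxB, hxA⟩ : ∃ x, x ∈ B ∧ x ∉ A := by
          by_contra hcon; push_neg at hcon; exact hBA hcon
        have hsub : A ∪ {x} ⊆ B := Set.union_subset hAB (by simpa using hxB)
        have hdc : (B \ (A ∪ {x})).ncard ≤ n := by
          have heq : B \ (A ∪ {x}) = (B \ A) \ {x} := by
            ext y; simp; tauto
          have hx' : x ∈ B \ A := ⟨hxB, hxA⟩
          have := Set.ncard_diff_singleton_add_one hx' (Set.toFinite _)
          rw [heq]; omega
        exact le_trans (ih (A ∪ {x}) B hdc hsub) (b1_step_le hxA)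
  exact key (B \ A).ncard A B le_rfl hAB

lemma reach_dd_iff {U : Set G.E} (x : (G.deleteEdges U).E) {v w : G.V} :
    ((G.deleteEdges U).deleteEdges {x}).Reachable v w ↔ G.R (U ∪ {x.1}) v w := by
  have adj_iff : ∀ a b : G.V,
      ((G.deleteEdges U).deleteEdges {x}).Adj a b ↔ (G.deleteEdges (U ∪ {x.1})).Adj a b := by
    intro a b
    constructor
    · rintro ⟨⟨⟨f, hfU⟩, hfx⟩, hf⟩
      refine adj_del_iff.2 ⟨f, ?_, hf⟩
      intro hm
      rcases hm with hm | hm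
      · exact hfU hm
      · exact hfx (Set.mem_singleton_iff.2 (Subtype.ext (by simpa using hm)))
    · intro hab
      rw [adj_del_iff] at hab
      obtain ⟨f, hf, hfab⟩ := hab
      have hfU : f ∉ U := fun hm => hf (Or.inl hm)
      have hfx : (⟨f, hfU⟩ : (G.deleteEdges U).E) ∉ ({x} : Set (G.deleteEdges U).E) := by
        intro hm
        replace hm : (⟨f, hfU⟩ : (G.deleteEdges U).E) = x := hm
        exact hf (Or.inr (by simp [← hm]))
      exact ⟨⟨⟨f, hfU⟩, hfx⟩, hfab⟩
  constructor
  · exact Relation.ReflTransGen.mono (fun a b => (adj_iff a b).1) v w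
  · exact Relation.ReflTransGen.mono (fun a b => (adj_iff a b).2) v w

lemma sepfree_iff {U : Set G.E} :
    (G.deleteEdges U).sepEdges = ∅ ↔
      ∀ e, e ∉ U → G.R (U ∪ {e}) (G.fst e) (G.snd e) := by
  rw [Set.eq_empty_iff_forall_notMem]
  constructor
  · intro h e he
    have := h ⟨e, he⟩
    simp only [sepEdges, Set.mem_setOf_eq, IsSeparating, not_not] at this
    exact (reach_dd_iff ⟨e, he⟩).1 (by by_contra hc; exact this hc)
  · intro h x
    simp only [sepEdges, Set.mem_setOf_eq, IsSeparating, not_not]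
    exact (reach_dd_iff x).2 (h x.1 x.2)

lemma exists_closure : ∀ n (U B : Set G.E), U ⊆ B → (B \ U).ncard ≤ n →
    (G.deleteEdges B).sepEdges = ∅ →
    ∃ W, U ⊆ W ∧ W ⊆ B ∧ (G.deleteEdges W).sepEdges = ∅ ∧
      (G.deleteEdges W).b1 = (G.deleteEdges U).b1 := by
  intro n
  induction n with
  | zero =>
    intro U B hUB hc hB
    have : B \ U = ∅ := by rw [← Set.ncard_eq_zero (Set.toFinite _)]; omega
    have hBU : B ⊆ U := fun x hx => by
      by_contra hxu
      exact absurd (Set.mem_diff_of_mem hx hxu) (by rw [this]; exact id)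
    have hEq : U = B := Set.Subset.antisymm hUB hBU
    exact ⟨U, le_refl _, hUB, by rw [hEq]; exact hB, rfl⟩
  | succ n ih =>
    intro U B hUB hc hB
    by_cases hU : (G.deleteEdges U).sepEdges = ∅
    · exact ⟨U, le_refl _, hUB, hU, rfl⟩
    · obtain ⟨f, hfU, hfsep⟩ : ∃ f, f ∉ U ∧ ¬ G.R (U ∪ {f}) (G.fst f) (G.snd f) := by
        by_contra hcon
        push_neg at hcon
        exact hU (sepfree_iff.2 fun e he => hcon e he)
      have hfB : f ∈ B := by
        by_contra hfB
        have := sepfree_iff.1 hB f hfB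
        exact hfsep (R_mono (Set.union_subset_union hUB le_rfl) this)
      have hsub : U ∪ {f} ⊆ B := Set.union_subset hUB (by simpa using hfB)
      have hdc : (B \ (U ∪ {f})).ncard ≤ n := by
        have heq : B \ (U ∪ {f}) = (B \ U) \ {f} := by ext y; simp; tauto
        have hx' : f ∈ B \ U := ⟨hfB, hfU⟩
        have := Set.ncard_diff_singleton_add_one hx' (Set.toFinite _)
        rw [heq]; omega
      obtain ⟨W, hW1, hW2, hW3, hW4⟩ := ih (U ∪ {f}) B hsub hdc hB
      exact ⟨W, le_trans Set.subset_union_left hW1, hW2, hW3,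
        by rw [hW4, b1_step_sep hfU hfsep]⟩

end Multigraph

/-- The poset `SP_Γ` (subsets `S` with `Γ∖S` free of separating
edges, ordered by `S ≥ T ⇔ S ⊆ T`) is graded, with minimum element `E(Γ)` and
normalized rank function `S ↦ b₁(Γ∖S)`: the rank of the minimum is `0`, the rank is
monotone, and it increases by exactly `1` along covering relations. -/
theorem sp_poset_graded (G : Multigraph) :
    (G.deleteEdges (Set.univ : Set G.E)).sepEdges = ∅ ∧
    (G.deleteEdges (Set.univ : Set G.E)).b1 = 0 ∧
    (∀ A B : Set G.E, (G.deleteEdges A).sepEdges = ∅ → (G.deleteEdges B).sepEdges = ∅ →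
      A ⊆ B → (G.deleteEdges B).b1 ≤ (G.deleteEdges A).b1) ∧
    (∀ A B : Set G.E, (G.deleteEdges A).sepEdges = ∅ → (G.deleteEdges B).sepEdges = ∅ →
      A ⊂ B →
      (∀ U : Set G.E, (G.deleteEdges U).sepEdges = ∅ → A ⊆ U → U ⊆ B → U = A ∨ U = B) →
      (G.deleteEdges A).b1 = (G.deleteEdges B).b1 + 1) := by
  refine ⟨?_, ?_, ?_, ?_⟩
  · exact Set.eq_empty_iff_forall_notMem.2 fun x _ => x.2 (Set.mem_univ x.1)
  · haveI hE : IsEmpty (G.deleteEdges (Set.univ : Set G.E)).E :=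
      ⟨fun x => x.2 (Set.mem_univ x.1)⟩
    have hcE : Nat.card (G.deleteEdges (Set.univ : Set G.E)).E = 0 := Nat.card_of_isEmpty
    have hadj : ∀ v w : G.V, ¬ (G.deleteEdges (Set.univ : Set G.E)).Adj v w := by
      intro v w h
      rw [Multigraph.adj_del_iff] at h
      obtain ⟨e, he, _⟩ := h
      exact he (Set.mem_univ e)
    have hR : ∀ v w : G.V, G.R Set.univ v w → v = w := by
      intro v w h
      induction h with
      | refl => rfl
      | tail _ hab ih => exact absurd hab (hadj _ _)
    have hcomp : (G.deleteEdges (Set.univ : Set G.E)).numComponents = Nat.card G.V := by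
      unfold Multigraph.numComponents
      refine Nat.card_congr (Equiv.ofBijective (Quot.mk _) ⟨?_, ?_⟩).symm
      · intro v w h
        exact hR v w (Multigraph.mk_eq_iff.1 h)
      · intro q
        induction q using Quot.ind with | _ v => exact ⟨v, rfl⟩
    unfold Multigraph.b1
    rw [Multigraph.cardV_del, hcomp, hcE]
    ring
  · intro A B _ _ hAB
    exact Multigraph.b1_mono hAB
  · intro A B hA hB hAB hcover
    obtain ⟨e, heB, heA⟩ : ∃ e, e ∈ B ∧ e ∉ A := by
      by_contra h
      push_neg at h
      exact hAB.2 h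
    have hreach : G.R (A ∪ {e}) (G.fst e) (G.snd e) := Multigraph.sepfree_iff.1 hA e heA
    have hstep := Multigraph.b1_step_nonsep heA hreach
    have hsub : A ∪ {e} ⊆ B := Set.union_subset hAB.1 (by simpa using heB)
    obtain ⟨W, hW1, hW2, hW3, hW4⟩ :=
      Multigraph.exists_closure (B \ (A ∪ {e})).ncard (A ∪ {e}) B hsub le_rfl hB
    rcases hcover W hW3 (le_trans Set.subset_union_left hW1) hW2 with h | h
    · exfalso
      have : e ∈ W := hW1 (Or.inr rfl)
      rw [h] at this
      exact heA this
    · rw [h] at hW4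
      omega
end
end
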